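/- arXiv:1202.6430 — 5 statements merged into one kernel-verified Lean document; each statement's English description precedes it below -/
import Mathlib

section
/- With φ(z)=∫_z^u y ρ(y) dy and g_*(z)=φ(z)/ρ(z), one has ∫_0^z y/g_*(y) dy = ln(φ(0)/φ(z)) for every z in (l,u). Consequently ∫_l^0 y/g_*(y) dy = -∞ and ∫_0^u y/g_*(y) dy = +∞. -/
open MeasureTheory Set Filter

/-! Since `φ' = -y ρ` on `(l, u)`, the integrand `y / g_* = y ρ / φ` is the derivative of
`-log φ`, which gives the closed formula; as `φ → 0⁺` at both endpoints, `log (φ 0 / φ z) → +∞`. -/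

theorem hasDerivAt_integral_Ioo_left {E : Type*} [NormedAddCommGroup E] [NormedSpace ℝ E]
    [CompleteSpace E] {f : ℝ → E} {l u z : ℝ} (hf : ContinuousOn f (Ioo l u))
    (hint : IntegrableOn f (Ioo l u)) (hz : z ∈ Ioo l u) :
    HasDerivAt (fun x => ∫ y in Ioo x u, f y) (-f z) z := by
  have hnhds : Ioo l u ∈ nhds z := Ioo_mem_nhds hz.1 hz.2
  have hzu : IntervalIntegrable f volume z u := by
    rw [intervalIntegrable_iff_integrableOn_Ioc_of_le hz.2.le,
      integrableOn_Ioc_iff_integrableOn_Ioo]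
    exact hint.mono_set (Ioo_subset_Ioo_left hz.1.le)
  refine (intervalIntegral.integral_hasDerivAt_left hzu ⟨Ioo l u, hnhds, hint.1⟩
    ((hf z hz).continuousAt hnhds)).congr_of_eventuallyEq ?_
  filter_upwards [hnhds] with x hx
  rw [intervalIntegral.integral_of_le hx.2.le, integral_Ioc_eq_integral_Ioo]

theorem integral_div_eq_log_div {f φ : ℝ → ℝ} {a b : ℝ}
    (hderiv : ∀ x ∈ uIcc a b, HasDerivAt φ (-f x) x) (hf : ContinuousOn f (uIcc a b))
    (hφ : ∀ x ∈ uIcc a b, φ x ≠ 0) :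
    ∫ x in a..b, f x / φ x = Real.log (φ a / φ b) := by
  have hφcont : ContinuousOn φ (uIcc a b) := fun x hx =>
    (hderiv x hx).continuousAt.continuousWithinAt
  have hlog : ∀ x ∈ uIcc a b, HasDerivAt (fun y => -Real.log (φ y)) (f x / φ x) x := by
    intro x hx
    have h := ((hderiv x hx).log (hφ x hx)).neg
    rwa [neg_div, neg_neg] at h
  rw [intervalIntegral.integral_eq_sub_of_hasDerivAt hlog (hf.div hφcont hφ).intervalIntegrable,
    Real.log_div (hφ a left_mem_uIcc) (hφ b right_mem_uIcc)]
  ring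

theorem tendsto_log_div_atTop {α : Type*} {F : Filter α} {φ : α → ℝ} {c : ℝ} (hc : 0 < c)
    (hφ : Tendsto φ F (nhds 0)) (hpos : ∀ᶠ z in F, 0 < φ z) :
    Tendsto (fun z => Real.log (c / φ z)) F atTop := by
  have hφ' : Tendsto φ F (nhdsWithin 0 (Ioi 0)) :=
    tendsto_nhdsWithin_of_tendsto_nhds_of_eventually_within _ hφ hpos
  refine Real.tendsto_log_atTop.comp ?_
  simpa only [div_eq_mul_inv, Function.comp_apply] using (tendsto_inv_nhdsGT_zero.comp hφ').const_mul_atTop hc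

theorem stmt2_general (ρ φ gstar : ℝ → ℝ) (l u : ℝ) (hl : l < 0) (hu : 0 < u)
    (hρcont : ContinuousOn ρ (Ioo l u))
    (hint : IntegrableOn (fun y => y * ρ y) (Ioo l u))
    (hφ : ∀ z, φ z = ∫ y in Ioo z u, y * ρ y)
    (hφpos : ∀ z ∈ Ioo l u, 0 < φ z)
    (hg : ∀ z ∈ Ioo l u, gstar z = φ z / ρ z)
    (hφl : Tendsto φ (nhdsWithin l (Ioi l)) (nhds 0))
    (hφu : Tendsto φ (nhdsWithin u (Iio u)) (nhds 0)) :
    (∀ z ∈ Ioo l u, (∫ y in (0:ℝ)..z, y / gstar y) = Real.log (φ 0 / φ z)) ∧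
    Tendsto (fun z => ∫ y in (0:ℝ)..z, y / gstar y) (nhdsWithin l (Ioi l)) atTop ∧
    Tendsto (fun z => ∫ y in (0:ℝ)..z, y / gstar y) (nhdsWithin u (Iio u)) atTop := by
  have h0 : (0:ℝ) ∈ Ioo l u := ⟨hl, hu⟩
  have hyρ : ContinuousOn (fun y => y * ρ y) (Ioo l u) := continuousOn_id.mul hρcont
  have hderiv : ∀ z ∈ Ioo l u, HasDerivAt φ (-(z * ρ z)) z := fun z hz =>
    funext hφ ▸ hasDerivAt_integral_Ioo_left hyρ hint hz
  have key : ∀ z ∈ Ioo l u, (∫ y in (0:ℝ)..z, y / gstar y) = Real.log (φ 0 / φ z) := by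
    intro z hz
    have hsub : uIcc 0 z ⊆ Ioo l u := ordConnected_Ioo.uIcc_subset h0 hz
    rw [intervalIntegral.integral_congr (g := fun y => y * ρ y / φ y) fun y hy => by
      simp only [hg y (hsub hy), div_div_eq_mul_div]]
    exact integral_div_eq_log_div (fun x hx => hderiv x (hsub hx)) (hyρ.mono hsub)
      fun x hx => (hφpos x (hsub hx)).ne'
  have tendsto_atTop : ∀ F : Filter ℝ, Ioo l u ∈ F → Tendsto φ F (nhds 0) →
      Tendsto (fun z => ∫ y in (0:ℝ)..z, y / gstar y) F atTop := fun F hF hφF =>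
    (tendsto_log_div_atTop (hφpos 0 h0) hφF (Filter.mem_of_superset hF hφpos)).congr'
      (Filter.mem_of_superset hF fun z hz => (key z hz).symm)
  exact ⟨key, tendsto_atTop _ (Ioo_mem_nhdsGT (hl.trans hu)) hφl,
    tendsto_atTop _ (Ioo_mem_nhdsLT (hl.trans hu)) hφu⟩

/-- With `φ z = ∫_z^u y ρ(y) dy` and `g_* = φ/ρ`, one has
`∫_0^z y/g_*(y) dy = log (φ 0 / φ z)` for every `z ∈ (l,u)`; consequently
`∫_l^0 y/g_* dy = -∞` and `∫_0^u y/g_* dy = +∞`, i.e. the displayed interval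
integral `∫_0^z` tends to `+∞` as `z → l⁺` and as `z → u⁻`. -/
theorem stmt2 (ρ φ gstar : ℝ → ℝ) (l u : ℝ) (hl : l < 0) (hu : 0 < u)
    (hρcont : ContinuousOn ρ (Ioo l u))
    (hρpos : ∀ z ∈ Ioo l u, 0 < ρ z)
    (hρzero : ∀ z ∉ Ioo l u, ρ z = 0)
    (hint : IntegrableOn (fun y => y * ρ y) (Ioo l u))
    (hφ : ∀ z, φ z = ∫ y in Ioo z u, y * ρ y)
    (hφpos : ∀ z ∈ Ioo l u, 0 < φ z)
    (hg : ∀ z ∈ Ioo l u, gstar z = φ z / ρ z)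
    (hφl : Tendsto φ (nhdsWithin l (Ioi l)) (nhds 0))
    (hφu : Tendsto φ (nhdsWithin u (Iio u)) (nhds 0)) :
    (∀ z ∈ Ioo l u, (∫ y in (0:ℝ)..z, y / gstar y) = Real.log (φ 0 / φ z)) ∧
    Tendsto (fun z => ∫ y in (0:ℝ)..z, y / gstar y) (nhdsWithin l (Ioi l)) atTop ∧
    Tendsto (fun z => ∫ y in (0:ℝ)..z, y / gstar y) (nhdsWithin u (Iio u)) atTop :=
  stmt2_general ρ φ gstar l u hl hu hρcont hint hφ hφpos hg hφl hφu
end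

section
/- Let f be the solution of the Stein equation g_*(x) f'(x) - x f(x) = h(x) - E[h(Z)] given by f(x) = (1/(g_*(x)ρ(x))) ∫_l^x (h(y)-E[h(Z)]) ρ(y) dy, where h is Lipschitz. Then for all x∈(l,u), f'(x) = (1/(g_*(x)²ρ(x))) ∫_x^u ∫_l^x (1-Φ(s)) Φ(t) (h'(t)-h'(s)) dt ds. -/
/-!
Put `P = ∫_l^x Φ`, `Q = ∫_x^u (1 - Φ)`, `A = ∫_l^x Φ h'` and `B = ∫_x^u (1 - Φ) h'`. Since the
kernel `(1 - Φ(s)) Φ(t) (h'(t) - h'(s))` separates, the double integral equals `Q A - P B`.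
Integrating by parts against the absolutely continuous functions `Φ` (density `ρ`) and `h`
(Lipschitz), each of `P, Q, A, B` becomes an expression in `Φ(x)`, `h(x)` and the partial moments
`∫ y ρ`, `∫ h ρ`; with `E Z = 0` and `E h(Z) = m` one gets
`Q A - P B = (h(x) - m) g_*(x) ρ(x) + x ∫_l^x (h - m) ρ`, which is `g_*(x)² ρ(x) f'(x)` by the
Stein equation. Dividing by `g_*(x)² ρ(x)` is legitimate because `g_*(x) ρ(x) = ∫_x^u y ρ > 0`
for centred `Z`.
-/

open MeasureTheory Set Filter

theorem setIntegral_Ioo_eq_intervalIntegral {f : ℝ → ℝ} {a b : ℝ} (hab : a ≤ b) :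
    ∫ t in Ioo a b, f t = ∫ t in a..b, f t := by
  rw [intervalIntegral.integral_of_le hab, integral_Ioc_eq_integral_Ioo]

theorem setIntegral_Ioo_add_setIntegral_Ioo {f : ℝ → ℝ} {a b c : ℝ}
    (hf : IntegrableOn f (Ioo a c)) (hab : a ≤ b) (hbc : b ≤ c) :
    (∫ t in Ioo a b, f t) + ∫ t in Ioo b c, f t = ∫ t in Ioo a c, f t := by
  have hf' := (intervalIntegrable_iff_integrableOn_Ioo_of_le (hab.trans hbc)).2 hf
  rw [setIntegral_Ioo_eq_intervalIntegral hab, setIntegral_Ioo_eq_intervalIntegral hbc,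
    setIntegral_Ioo_eq_intervalIntegral (hab.trans hbc),
    intervalIntegral.integral_add_adjacent_intervals
      (hf'.mono_set (uIcc_subset_uIcc_left (mem_uIcc_of_le hab hbc)))
      (hf'.mono_set (uIcc_subset_uIcc_right (mem_uIcc_of_le hab hbc)))]

theorem integral_integral_mul_mul_sub {α : Type*} [MeasurableSpace α] {μ ν : Measure α}
    {φ ψ k : α → ℝ} (hφ : Integrable φ μ) (hφk : Integrable (fun s => φ s * k s) μ)
    (hψ : Integrable ψ ν) (hψk : Integrable (fun t => ψ t * k t) ν) :
    ∫ s, ∫ t, φ s * ψ t * (k t - k s) ∂ν ∂μ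
      = (∫ s, φ s ∂μ) * (∫ t, ψ t * k t ∂ν) - (∫ t, ψ t ∂ν) * ∫ s, φ s * k s ∂μ := by
  have hinner : ∀ s, ∫ t, φ s * ψ t * (k t - k s) ∂ν
      = φ s * (∫ t, ψ t * k t ∂ν) - (∫ t, ψ t ∂ν) * (φ s * k s) := by
    intro s
    simp only [mul_assoc, mul_sub]
    rw [integral_sub (hψk.const_mul _) ((hψ.mul_const _).const_mul _), integral_const_mul,
      integral_const_mul, integral_mul_const]
    ring
  simp only [hinner]
  rw [integral_sub (hφ.mul_const _) (hφk.const_mul _), integral_mul_const, integral_const_mul]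

theorem AbsolutelyContinuousOnInterval.integral_mul_eq_sub_of_ae_hasDerivAt
    {F F' g g' : ℝ → ℝ} {a b : ℝ}
    (hF : AbsolutelyContinuousOnInterval F a b) (hg : AbsolutelyContinuousOnInterval g a b)
    (hF' : ∀ᵐ t, t ∈ uIcc a b → HasDerivAt F (F' t) t)
    (hg' : ∀ᵐ t, t ∈ uIcc a b → HasDerivAt g (g' t) t) :
    ∫ t in a..b, F t * g' t = F b * g b - F a * g a - ∫ t in a..b, F' t * g t := by
  have hFd : ∀ᵐ t, t ∈ uIoc a b → F' t * g t = deriv F t * g t := by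
    filter_upwards [hF'] with t ht hmem
    rw [(ht (uIoc_subset_uIcc hmem)).deriv]
  have hgd : ∀ᵐ t, t ∈ uIoc a b → F t * g' t = F t * deriv g t := by
    filter_upwards [hg'] with t ht hmem
    rw [(ht (uIoc_subset_uIcc hmem)).deriv]
  rw [intervalIntegral.integral_congr_ae hFd, intervalIntegral.integral_congr_ae hgd]
  exact hF.integral_mul_deriv_eq_deriv_mul hg

theorem LipschitzWith.integrableOn_of_ae_hasDerivAt {f f' : ℝ → ℝ} {K : NNReal}
    (hf : LipschitzWith K f) (hf' : ∀ᵐ t, HasDerivAt f (f' t) t) {s : Set ℝ}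
    (hs : volume s ≠ ⊤) : IntegrableOn f' s := by
  have hderiv : IntegrableOn (deriv f) s :=
    Measure.integrableOn_of_bounded hs (measurable_deriv f).aestronglyMeasurable
      (ae_of_all _ fun _ => norm_deriv_le_of_lipschitz hf)
  exact hderiv.congr_fun_ae (ae_restrict_of_ae (hf'.mono fun t ht => ht.deriv))

theorem setIntegral_Ioo_id_mul_pos_of_integral_eq_zero {ρ : ℝ → ℝ} {l u x : ℝ}
    (hx : x ∈ Ioo l u) (hρpos : ∀ z ∈ Ioo l u, 0 < ρ z)
    (hint : IntegrableOn (fun y => y * ρ y) (Ioo l u))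
    (hmean : ∫ y in Ioo l u, y * ρ y = 0) : 0 < ∫ y in Ioo x u, y * ρ y := by
  have hii := (intervalIntegrable_iff_integrableOn_Ioo_of_le (hx.1.trans hx.2).le).2 hint
  rcases le_or_gt 0 x with hx0 | hx0
  · rw [setIntegral_Ioo_eq_intervalIntegral hx.2.le]
    exact intervalIntegral.intervalIntegral_pos_of_pos_on
      (hii.mono_set (uIcc_subset_uIcc_right (mem_uIcc_of_le hx.1.le hx.2.le)))
      (fun y hy => mul_pos (hx0.trans_lt hy.1) (hρpos y ⟨hx.1.trans hy.1, hy.2⟩)) hx.2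
  · have hleft : 0 < ∫ y in l..x, -(y * ρ y) :=
      intervalIntegral.intervalIntegral_pos_of_pos_on
        (hii.mono_set (uIcc_subset_uIcc_left (mem_uIcc_of_le hx.1.le hx.2.le))).neg
        (fun y hy => neg_pos.2 (mul_neg_of_neg_of_pos (hy.2.trans hx0)
          (hρpos y ⟨hy.1, hy.2.trans hx.2⟩))) hx.1
    have hsplit := setIntegral_Ioo_add_setIntegral_Ioo hint hx.1.le hx.2.le
    rw [hmean, setIntegral_Ioo_eq_intervalIntegral hx.1.le] at hsplit
    rw [intervalIntegral.integral_neg] at hleft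
    linarith

section CDF

variable {ρ Φ : ℝ → ℝ} {l : ℝ}

theorem cdf_eq_intervalIntegral (hρ : ∀ z ≤ l, ρ z = 0) (hΦ : ∀ x, Φ x = ∫ t in Ioo l x, ρ t) :
    Φ = fun x => ∫ t in l..x, ρ t := by
  funext x
  rcases le_total l x with hlx | hxl
  · rw [hΦ, setIntegral_Ioo_eq_intervalIntegral hlx]
  · rw [hΦ, Ioo_eq_empty_of_le hxl, Measure.restrict_empty, integral_zero_measure,
      intervalIntegral.integral_symm, intervalIntegral.integral_congr (g := 0) fun z hz => hρ z ?_]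
    · simp
    · exact (uIcc_of_le hxl ▸ hz).2

theorem ae_hasDerivAt_cdf (hρ : Integrable ρ) (hΦ : Φ = fun x => ∫ t in l..x, ρ t) :
    ∀ᵐ t, HasDerivAt Φ (ρ t) t := by
  filter_upwards [LocallyIntegrable.ae_hasDerivAt_integral hρ.locallyIntegrable] with t ht
  exact hΦ ▸ ht l

theorem integral_cdf_mul_eq_sub (hρ : Integrable ρ) (hΦ : Φ = fun x => ∫ t in l..x, ρ t)
    {x : ℝ} (hlx : l ≤ x) {g g' : ℝ → ℝ} (hg : AbsolutelyContinuousOnInterval g l x)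
    (hg' : ∀ᵐ t, t ∈ uIcc l x → HasDerivAt g (g' t) t) :
    ∫ t in Ioo l x, Φ t * g' t = Φ x * g x - ∫ t in Ioo l x, g t * ρ t := by
  have hΦac : AbsolutelyContinuousOnInterval Φ l x :=
    hΦ ▸ hρ.intervalIntegrable.absolutelyContinuousOnInterval_intervalIntegral left_mem_uIcc
  have hΦl : Φ l = 0 := by simp [hΦ]
  rw [setIntegral_Ioo_eq_intervalIntegral hlx, setIntegral_Ioo_eq_intervalIntegral hlx,
    hΦac.integral_mul_eq_sub_of_ae_hasDerivAt hg
      ((ae_hasDerivAt_cdf hρ hΦ).mono fun t ht _ => ht) hg', hΦl]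
  simp only [mul_comm (ρ _), zero_mul, sub_zero]

theorem integral_one_sub_cdf_mul_eq_sub (hρ : Integrable ρ)
    (hΦ : Φ = fun x => ∫ t in l..x, ρ t) {x u : ℝ} (hlx : l ≤ x) (hxu : x ≤ u) (hΦu : Φ u = 1)
    {g g' : ℝ → ℝ} (hg : AbsolutelyContinuousOnInterval g x u)
    (hg' : ∀ᵐ t, t ∈ uIcc x u → HasDerivAt g (g' t) t) :
    ∫ t in Ioo x u, (1 - Φ t) * g' t = (∫ t in Ioo x u, g t * ρ t) - (1 - Φ x) * g x := by
  have hΦac : AbsolutelyContinuousOnInterval Φ x u :=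
    (hΦ ▸ hρ.intervalIntegrable.absolutelyContinuousOnInterval_intervalIntegral
      left_mem_uIcc).mono (uIcc_subset_uIcc_right (mem_uIcc_of_le hlx hxu))
  have htail' : ∀ᵐ t, t ∈ uIcc x u → HasDerivAt (fun t => 1 - Φ t) (-ρ t) t :=
    (ae_hasDerivAt_cdf hρ hΦ).mono fun t ht _ => ht.const_sub 1
  have htail : AbsolutelyContinuousOnInterval (fun t => 1 - Φ t) x u :=
    contDiffOn_const.absolutelyContinuousOnInterval.sub hΦac
  rw [setIntegral_Ioo_eq_intervalIntegral hxu, setIntegral_Ioo_eq_intervalIntegral hxu,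
    htail.integral_mul_eq_sub_of_ae_hasDerivAt hg htail' hg', hΦu]
  simp only [neg_mul, intervalIntegral.integral_neg, mul_comm (ρ _), sub_self, zero_mul, zero_sub]
  ring

theorem integral_integral_cdf_kernel {h h' : ℝ → ℝ} {u x : ℝ} {K : NNReal} (hρ : Integrable ρ)
    (hΦ : Φ = fun x => ∫ t in l..x, ρ t) (hΦu : Φ u = 1)
    (hLip : LipschitzWith K h) (hderiv : ∀ᵐ t, HasDerivAt h (h' t) t) (hlx : l ≤ x)
    (hxu : x ≤ u) :
    ∫ s in Ioo x u, ∫ t in Ioo l x, (1 - Φ s) * Φ t * (h' t - h' s)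
      = ((∫ y in Ioo x u, y * ρ y) - (1 - Φ x) * x) * (Φ x * h x - ∫ y in Ioo l x, h y * ρ y)
        - (Φ x * x - ∫ y in Ioo l x, y * ρ y)
          * ((∫ y in Ioo x u, h y * ρ y) - (1 - Φ x) * h x) := by
  have hΦcont : Continuous Φ :=
    hΦ ▸ intervalIntegral.continuous_primitive (fun _ _ => hρ.intervalIntegrable) l
  have htail_cont : Continuous fun t => 1 - Φ t := continuous_const.sub hΦcont
  have hh' : ∀ a b, IntegrableOn h' (Ioo a b) := fun a b =>
    hLip.integrableOn_of_ae_hasDerivAt hderiv measure_Ioo_lt_top.ne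
  have hid : ∀ a b, AbsolutelyContinuousOnInterval id a b := fun a b =>
    LipschitzWith.id.lipschitzOnWith.absolutelyContinuousOnInterval
  have hid' : ∀ a b : ℝ, ∀ᵐ t : ℝ, t ∈ uIcc a b → HasDerivAt id 1 t := fun a b =>
    ae_of_all _ fun t _ => hasDerivAt_id t
  have hhac : ∀ a b, AbsolutelyContinuousOnInterval h a b := fun a b =>
    hLip.lipschitzOnWith.absolutelyContinuousOnInterval
  have hhd : ∀ a b, ∀ᵐ t, t ∈ uIcc a b → HasDerivAt h (h' t) t := fun a b =>
    hderiv.mono fun t ht _ => ht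
  have hΦ_int := integral_cdf_mul_eq_sub hρ hΦ hlx (hid l x) (hid' l x)
  have htail_int := integral_one_sub_cdf_mul_eq_sub hρ hΦ hlx hxu hΦu (hid x u) (hid' x u)
  simp only [mul_one, id] at hΦ_int htail_int
  rw [integral_integral_mul_mul_sub (htail_cont.integrableOn_Icc.mono_set Ioo_subset_Icc_self)
      (IntegrableOn.continuousOn_mul_of_subset htail_cont.continuousOn (hh' x u) isCompact_Icc
        measurableSet_Ioo Ioo_subset_Icc_self)
      (hΦcont.integrableOn_Icc.mono_set Ioo_subset_Icc_self)
      (IntegrableOn.continuousOn_mul_of_subset hΦcont.continuousOn (hh' l x) isCompact_Icc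
        measurableSet_Ioo Ioo_subset_Icc_self),
    hΦ_int, htail_int, integral_cdf_mul_eq_sub hρ hΦ hlx (hhac l x) (hhd l x),
    integral_one_sub_cdf_mul_eq_sub hρ hΦ hlx hxu hΦu (hhac x u) (hhd x u)]

theorem integral_integral_stein_kernel {h h' : ℝ → ℝ} {u x m : ℝ} {K : NNReal}
    (hρ : Integrable ρ) (hΦ : Φ = fun x => ∫ t in l..x, ρ t) (hΦu : Φ u = 1)
    (hint : IntegrableOn (fun y => y * ρ y) (Ioo l u)) (hmean : ∫ y in Ioo l u, y * ρ y = 0)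
    (hLip : LipschitzWith K h) (hderiv : ∀ᵐ t, HasDerivAt h (h' t) t)
    (hm : m = ∫ y in Ioo l u, h y * ρ y) (hx : x ∈ Ioo l u) :
    ∫ s in Ioo x u, ∫ t in Ioo l x, (1 - Φ s) * Φ t * (h' t - h' s)
      = (h x - m) * (∫ y in Ioo x u, y * ρ y) + x * ∫ y in Ioo l x, (h y - m) * ρ y := by
  have hlx := hx.1.le
  have hxu := hx.2.le
  have hρh : IntegrableOn (fun y => h y * ρ y) (Ioo l u) :=
    IntegrableOn.continuousOn_mul_of_subset hLip.continuous.continuousOn hρ.integrableOn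
      isCompact_Icc measurableSet_Ioo Ioo_subset_Icc_self
  have hm_split := setIntegral_Ioo_add_setIntegral_Ioo hρh hlx hxu
  have hmean_split := setIntegral_Ioo_add_setIntegral_Ioo hint hlx hxu
  rw [← hm] at hm_split
  rw [hmean] at hmean_split
  have hΦx : Φ x = ∫ y in Ioo l x, ρ y := by rw [hΦ, setIntegral_Ioo_eq_intervalIntegral hlx]
  have hF : ∫ y in Ioo l x, (h y - m) * ρ y = (∫ y in Ioo l x, h y * ρ y) - m * Φ x := by
    simp only [sub_mul]
    rw [integral_sub (hρh.mono_set (Ioo_subset_Ioo_right hxu)) (hρ.integrableOn.const_mul m),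
      MeasureTheory.integral_const_mul, hΦx]
  rw [integral_integral_cdf_kernel hρ hΦ hΦu hLip hderiv hlx hxu, hF]
  linear_combination -(x * Φ x + ∫ y in Ioo x u, y * ρ y) * hm_split
    + ((∫ y in Ioo x u, h y * ρ y) - (1 - Φ x) * h x) * hmean_split

end CDF

theorem stmt6_general (ρ Φ gstar h h' f : ℝ → ℝ) (l u : ℝ)
    (K : NNReal) (m : ℝ)
    (hρpos : ∀ z ∈ Ioo l u, 0 < ρ z)
    (hρzero : ∀ z ∉ Ioo l u, ρ z = 0)
    (hρint : IntegrableOn ρ (Ioo l u))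
    (hρprob : (∫ y in Ioo l u, ρ y) = 1)
    (hint : IntegrableOn (fun y => y * ρ y) (Ioo l u))
    (hmean : (∫ y in Ioo l u, y * ρ y) = 0)
    (hΦ : ∀ x, Φ x = ∫ t in Ioo l x, ρ t)
    (hg : ∀ x ∈ Ioo l u, gstar x * ρ x = ∫ y in Ioo x u, y * ρ y)
    (hLip : LipschitzWith K h)
    (hderiv : ∀ᵐ t ∂(volume : Measure ℝ), HasDerivAt h (h' t) t)
    (hm : m = ∫ y in Ioo l u, h y * ρ y)
    (hf : ∀ x ∈ Ioo l u,
      f x = (1 / (gstar x * ρ x)) * ∫ y in Ioo l x, (h y - m) * ρ y)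
    (hSteinEq : ∀ x ∈ Ioo l u, ∃ f'x : ℝ, HasDerivAt f f'x x ∧
      gstar x * f'x - x * f x = h x - m) :
    ∀ x ∈ Ioo l u,
      HasDerivAt f
        ((1 / ((gstar x) ^ 2 * ρ x)) *
          ∫ s in Ioo x u, ∫ t in Ioo l x, (1 - Φ s) * Φ t * (h' t - h' s)) x := by
  have hρ : Integrable ρ :=
    (integrableOn_iff_integrable_of_support_subset (Function.support_subset_iff'.2 hρzero)).1 hρint
  have hΦ_primitive := cdf_eq_intervalIntegral (fun z hz => hρzero z fun hz' => hz'.1.not_ge hz) hΦ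
  intro x hx
  obtain ⟨d, hd, hstein⟩ := hSteinEq x hx
  have hG : 0 < gstar x * ρ x :=
    hg x hx ▸ setIntegral_Ioo_id_mul_pos_of_integral_eq_zero hx hρpos hint hmean
  have hρx : ρ x ≠ 0 := right_ne_zero_of_mul hG.ne'
  have hgx : gstar x ≠ 0 := left_ne_zero_of_mul hG.ne'
  convert hd using 1
  rw [integral_integral_stein_kernel hρ hΦ_primitive ((hΦ u).trans hρprob) hint hmean hLip hderiv
    hm hx, ← hg x hx]
  rw [hf x hx] at hstein
  field_simp at hstein ⊢
  linear_combination -hstein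

/-- The solution `f` of the Stein equation
`g_*(x) f'(x) - x f(x) = h(x) - E[h(Z)]`, given by
`f(x) = (1/(g_*(x)ρ(x))) ∫_l^x (h(y) - E[h(Z)]) ρ(y) dy` for a Lipschitz test
function `h`, has derivative
`f'(x) = (1/(g_*(x)² ρ(x))) ∫_x^u ∫_l^x (1-Φ(s)) Φ(t) (h'(t)-h'(s)) dt ds`
for all `x ∈ (l,u)`. -/
theorem stmt6 (ρ Φ gstar h h' f : ℝ → ℝ) (l u : ℝ) (hl : l < 0) (hu : 0 < u)
    (K : NNReal) (m : ℝ)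
    (hρcont : ContinuousOn ρ (Ioo l u))
    (hρpos : ∀ z ∈ Ioo l u, 0 < ρ z)
    (hρzero : ∀ z ∉ Ioo l u, ρ z = 0)
    (hρint : IntegrableOn ρ (Ioo l u))
    (hρprob : (∫ y in Ioo l u, ρ y) = 1)
    (hint : IntegrableOn (fun y => y * ρ y) (Ioo l u))
    (hmean : (∫ y in Ioo l u, y * ρ y) = 0)
    (hΦ : ∀ x, Φ x = ∫ t in Ioo l x, ρ t)
    (hg : ∀ x ∈ Ioo l u, gstar x * ρ x = ∫ y in Ioo x u, y * ρ y)
    (hLip : LipschitzWith K h)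
    (hderiv : ∀ᵐ t ∂(volume : Measure ℝ), HasDerivAt h (h' t) t)
    (hm : m = ∫ y in Ioo l u, h y * ρ y)
    (hhint : IntegrableOn (fun y => (h y - m) * ρ y) (Ioo l u))
    (hf : ∀ x ∈ Ioo l u,
      f x = (1 / (gstar x * ρ x)) * ∫ y in Ioo l x, (h y - m) * ρ y)
    (hSteinEq : ∀ x ∈ Ioo l u, ∃ f'x : ℝ, HasDerivAt f f'x x ∧
      gstar x * f'x - x * f x = h x - m) :
    ∀ x ∈ Ioo l u,
      HasDerivAt f
        ((1 / ((gstar x) ^ 2 * ρ x)) *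
          ∫ s in Ioo x u, ∫ t in Ioo l x, (1 - Φ s) * Φ t * (h' t - h' s)) x :=
  stmt6_general ρ Φ gstar h h' f l u K m hρpos hρzero hρint hρprob hint hmean hΦ hg hLip hderiv hm
    hf hSteinEq
end

section
/- If X has the same law as Z (with Z centered, having continuous density ρ_* on (l,u)), then g_X := E[⟨DX,-DL^{-1}X⟩_H | X] equals ∫_X^u y ρ_*(y) dy / ρ_*(X) almost surely; in particular g_X has the same law as g_Z, and hence E[g_X²] = E[g_Z²]. -/
open MeasureTheory Set Filter

/-!
Put `Φ(x) = ∫_x^u y ρ(y) dy`; it vanishes outside `(l, u)` because `Z` is centred. For a smooth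
compactly supported `g` with primitive `G`, integration by parts against `Φ` turns the hypothesis
`E[g(X) ψ(X)] = E[X G(X)]` into `∫ g ψ ρ = ∫ g Φ`, so `ψ ρ = Φ` Lebesgue-almost everywhere,
that is `ψ = Φ / ρ` almost everywhere for the law `ρ(y) dy` of `X`. Thus `g_X` and `g_Z` are the
same measurable function `Φ / ρ` of the identically distributed `X` and `Z`.
-/

open Function ProbabilityTheory

section TailIntegral

variable {f : ℝ → ℝ} {l u : ℝ}

theorem setIntegral_Ioo_eq_intervalIntegral_s11 (hf : support f ⊆ Ioo l u) (x : ℝ) :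
    ∫ y in Ioo x u, f y = ∫ t in x..u, f t := by
  rcases le_or_gt u x with hux | hxu
  · have hzero : ∫ t in u..x, f t = 0 := by
      rw [intervalIntegral.integral_of_le hux]
      exact setIntegral_eq_zero_of_forall_eq_zero fun y hy =>
        notMem_support.1 fun hy' => (hf hy').2.not_gt hy.1
    rw [Ioo_eq_empty (not_lt.2 hux), Measure.restrict_empty, integral_zero_measure,
      intervalIntegral.integral_symm, hzero, neg_zero]
  · rw [intervalIntegral.integral_of_le hxu.le, integral_Ioc_eq_integral_Ioo]

theorem continuous_intervalIntegral_left (hf : Integrable f) :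
    Continuous fun x => ∫ t in x..u, f t := by
  simp_rw [intervalIntegral.integral_symm u]
  exact (intervalIntegral.continuous_primitive (fun _ _ => hf.intervalIntegrable) u).neg

theorem intervalIntegral_eq_zero_of_notMem (hf : support f ⊆ Ioo l u)
    (hmean : ∫ y in Ioo l u, f y = 0) {x : ℝ} (hx : x ∉ Ioo l u) :
    ∫ t in x..u, f t = 0 := by
  rw [← setIntegral_Ioo_eq_intervalIntegral_s11 hf]
  rcases le_or_gt u x with hux | hxu
  · rw [Ioo_eq_empty (not_lt.2 hux), Measure.restrict_empty, integral_zero_measure]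
  · have hxl : x ≤ l := by
      by_contra! hlx
      exact hx ⟨hlx, hxu⟩
    have hvanish : ∀ s, Ioo l u ⊆ s → ∀ y ∉ s, f y = 0 := fun s hs y hy =>
      notMem_support.1 fun hy' => hy (hs (hf hy'))
    rw [setIntegral_eq_integral_of_forall_compl_eq_zero (hvanish _ (Ioo_subset_Ioo_left hxl)),
      ← setIntegral_eq_integral_of_forall_compl_eq_zero (hvanish _ subset_rfl), hmean]

theorem hasCompactSupport_intervalIntegral (hf : support f ⊆ Ioo l u)
    (hmean : ∫ y in Ioo l u, f y = 0) : HasCompactSupport fun x => ∫ t in x..u, f t :=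
  HasCompactSupport.intro isCompact_Icc fun _ hx =>
    intervalIntegral_eq_zero_of_notMem hf hmean fun hx' => hx (Ioo_subset_Icc_self hx')

theorem integral_mul_eq_integral_deriv_mul_intervalIntegral {F g : ℝ → ℝ} (hlu : l ≤ u)
    (hf : Integrable f) (hsupp : support f ⊆ Ioo l u) (hmean : ∫ y in Ioo l u, f y = 0)
    (hfc : ContinuousOn f (Ioo l u)) (hg : Continuous g) (hF : ∀ x, HasDerivAt F (g x) x) :
    ∫ y, F y * f y = ∫ y, g y * ∫ t in y..u, f t := by
  set Φ : ℝ → ℝ := fun x => ∫ t in x..u, f t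
  have hΦc : Continuous Φ := continuous_intervalIntegral_left hf
  have hFc : Continuous F := continuous_iff_continuousAt.2 fun x => (hF x).continuousAt
  have hΦl : Φ l = 0 := intervalIntegral_eq_zero_of_notMem hsupp hmean (lt_irrefl l ·.1)
  have hΦu : Φ u = 0 := intervalIntegral_eq_zero_of_notMem hsupp hmean (lt_irrefl u ·.2)
  have hΦ' : ∀ x ∈ Ioo (min l u) (max l u), HasDerivAt Φ (-f x) x := by
    rw [min_eq_left hlu, max_eq_right hlu]
    intro x hx
    exact intervalIntegral.integral_hasDerivAt_left hf.intervalIntegrable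
      hf.aestronglyMeasurable.stronglyMeasurableAtFilter
      (hfc.continuousAt (Ioo_mem_nhds hx.1 hx.2))
  have hparts := intervalIntegral.integral_mul_deriv_eq_deriv_mul_of_hasDerivAt
    hFc.continuousOn hΦc.continuousOn (fun x _ => hF x) hΦ'
    (hg.intervalIntegrable l u) hf.intervalIntegrable.neg
  have hgΦ : support (fun y => g y * Φ y) ⊆ Ioc l u := fun x hx =>
    Ioo_subset_Ioc_self <| by_contra fun hx' =>
      hx (by simp only [intervalIntegral_eq_zero_of_notMem hsupp hmean hx', mul_zero, Φ])
  have hFf : support (fun y => F y * f y) ⊆ Ioc l u :=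
    (support_mul_subset_right _ _).trans (hsupp.trans Ioo_subset_Ioc_self)
  rw [← intervalIntegral.integral_eq_integral_of_support_subset hFf,
    ← intervalIntegral.integral_eq_integral_of_support_subset hgΦ]
  simp only [mul_neg, intervalIntegral.integral_neg, hΦl, hΦu, mul_zero, sub_zero,
    zero_sub, neg_inj] at hparts
  exact hparts

end TailIntegral

theorem ContinuousOn.measurable_of_support_subset {α γ : Type*} [TopologicalSpace α]
    [MeasurableSpace α] [OpensMeasurableSpace α] [TopologicalSpace γ] [MeasurableSpace γ]
    [BorelSpace γ] [Zero γ] {f : α → γ} {s : Set α} (hf : ContinuousOn f s)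
    (hs : MeasurableSet s) (hsupp : support f ⊆ s) : Measurable f := by
  classical
  rw [← indicator_eq_self.2 hsupp, ← piecewise_eq_indicator]
  exact hf.measurable_piecewise continuousOn_const hs

section Density

variable {α E : Type*} [MeasurableSpace α] [NormedAddCommGroup E] [NormedSpace ℝ E]
  {ν : Measure α} {ρ : α → ℝ}

theorem eq_withDensity_ofReal_of_forall_apply_eq {μ : Measure α} [NeZero μ] (hρ : 0 ≤ ρ)
    (h : ∀ s, MeasurableSet s → μ s = ENNReal.ofReal (∫ y in s, ρ y ∂ν)) :
    μ = ν.withDensity fun y => ENNReal.ofReal (ρ y) := by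
  have hρint : Integrable ρ ν := by
    by_contra hρint
    have huniv := h univ MeasurableSet.univ
    rw [Measure.restrict_univ, integral_undef hρint, ENNReal.ofReal_zero,
      Measure.measure_univ_eq_zero] at huniv
    exact NeZero.ne μ huniv
  ext s hs
  rw [h s hs, withDensity_apply _ hs,
    ofReal_integral_eq_lintegral_ofReal hρint.integrableOn (ae_of_all _ hρ)]

theorem integral_withDensity_ofReal (hρm : Measurable ρ) (hρ : 0 ≤ ρ) (g : α → E) :
    ∫ y, g y ∂ν.withDensity (fun y => ENNReal.ofReal (ρ y)) = ∫ y, ρ y • g y ∂ν := by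
  simp only [integral_withDensity_eq_integral_toReal_smul hρm.ennreal_ofReal
    (ae_of_all _ fun _ => ENNReal.ofReal_lt_top), ENNReal.toReal_ofReal (hρ _)]

theorem integrable_withDensity_ofReal_iff (hρm : Measurable ρ) (hρ : 0 ≤ ρ) {g : α → E} :
    Integrable g (ν.withDensity fun y => ENNReal.ofReal (ρ y)) ↔
      Integrable (fun y => ρ y • g y) ν := by
  simp only [integrable_withDensity_iff_integrable_smul' hρm.ennreal_ofReal
    (ae_of_all _ fun _ => ENNReal.ofReal_lt_top), ENNReal.toReal_ofReal (hρ _)]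

end Density

/-- For a density `ρ` supported in `(l, u)` this is the Stein kernel
`τ(x) = ∫_x^∞ y ρ(y) dy / ρ(x)`; it is `0` where `ρ` vanishes. -/
noncomputable def steinKernel (ρ : ℝ → ℝ) (u x : ℝ) : ℝ :=
  (∫ y in Ioo x u, y * ρ y) / ρ x

section SteinKernel

variable {ρ : ℝ → ℝ} {l u : ℝ}

theorem steinKernel_eq_intervalIntegral_div (hsupp : support ρ ⊆ Ioo l u) (x : ℝ) :
    steinKernel ρ u x = (∫ t in x..u, t * ρ t) / ρ x := by
  rw [steinKernel, setIntegral_Ioo_eq_intervalIntegral_s11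
    ((support_mul_subset_right _ _).trans hsupp)]

theorem measurable_steinKernel (hρm : Measurable ρ) (hint : Integrable fun y => y * ρ y)
    (hsupp : support ρ ⊆ Ioo l u) : Measurable (steinKernel ρ u) := by
  rw [funext (steinKernel_eq_intervalIntegral_div hsupp)]
  exact (continuous_intervalIntegral_left hint).measurable.div hρm

open scoped ContDiff in
theorem ae_eq_steinKernel_of_forall_integral_mul_eq {ψ : ℝ → ℝ} (hlu : l ≤ u)
    (hρ : 0 ≤ ρ) (hρc : ContinuousOn ρ (Ioo l u)) (hsupp : support ρ ⊆ Ioo l u)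
    (hint : Integrable fun y => y * ρ y) (hmean : ∫ y in Ioo l u, y * ρ y = 0)
    (hψ : Integrable ψ (volume.withDensity fun y => ENNReal.ofReal (ρ y)))
    (hIBP : ∀ g G : ℝ → ℝ, Continuous g → HasCompactSupport g →
      (∀ x, HasDerivAt G (g x) x) →
      ∫ y, g y * ψ y ∂volume.withDensity (fun y => ENNReal.ofReal (ρ y)) =
        ∫ y, y * G y ∂volume.withDensity (fun y => ENNReal.ofReal (ρ y))) :
    ψ =ᵐ[volume.withDensity fun y => ENNReal.ofReal (ρ y)] steinKernel ρ u := by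
  have hρm : Measurable ρ := hρc.measurable_of_support_subset measurableSet_Ioo hsupp
  have hfsupp : support (fun y => y * ρ y) ⊆ Ioo l u :=
    (support_mul_subset_right _ _).trans hsupp
  set Φ : ℝ → ℝ := fun x => ∫ t in x..u, t * ρ t
  have hΦ : Integrable Φ :=
    (continuous_intervalIntegral_left hint).integrable_of_hasCompactSupport
      (hasCompactSupport_intervalIntegral hfsupp hmean)
  have hρψ : Integrable fun y => ρ y * ψ y := (integrable_withDensity_ofReal_iff hρm hρ).1 hψ
  have hweak : ∀ g : ℝ → ℝ, ContDiff ℝ ∞ g → HasCompactSupport g →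
      ∫ y, g y • (ρ y * ψ y) = ∫ y, g y • Φ y := by
    intro g hg hgs
    have hG := fun x => (hg.continuous.integral_hasStrictDerivAt 0 x).hasDerivAt
    calc ∫ y, g y • (ρ y * ψ y)
        = ∫ y, g y * ψ y ∂volume.withDensity (fun y => ENNReal.ofReal (ρ y)) := by
          rw [integral_withDensity_ofReal hρm hρ]
          exact integral_congr_ae (ae_of_all _ fun y => by simp only [smul_eq_mul]; ring)
      _ = ∫ y, y * (∫ t in (0 : ℝ)..y, g t)
            ∂volume.withDensity (fun y => ENNReal.ofReal (ρ y)) := hIBP _ _ hg.continuous hgs hG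
      _ = ∫ y, (∫ t in (0 : ℝ)..y, g t) * (y * ρ y) := by
          rw [integral_withDensity_ofReal hρm hρ]
          exact integral_congr_ae (ae_of_all _ fun y => by simp only [smul_eq_mul]; ring)
      _ = ∫ y, g y • Φ y :=
          integral_mul_eq_integral_deriv_mul_intervalIntegral hlu hint hfsupp hmean
            (continuousOn_id.mul hρc) hg.continuous hG
  have hae : ∀ᵐ y, ρ y * ψ y = Φ y :=
    ae_eq_of_integral_contDiff_smul_eq hρψ.locallyIntegrable hΦ.locallyIntegrable hweak
  rw [EventuallyEq, ae_withDensity_iff hρm.ennreal_ofReal]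
  filter_upwards [hae] with y hy hρy
  rw [steinKernel_eq_intervalIntegral_div hsupp, eq_div_iff fun h => hρy (by simp [h]), mul_comm]
  exact hy

theorem comp_ae_eq_steinKernel_comp {Ω : Type*} [MeasurableSpace Ω] {P : Measure Ω}
    {X : Ω → ℝ} {ψ : ℝ → ℝ} (hX : Measurable X) (hψm : Measurable ψ)
    (hlaw : P.map X = volume.withDensity fun y => ENNReal.ofReal (ρ y)) (hlu : l ≤ u)
    (hρ : 0 ≤ ρ) (hρc : ContinuousOn ρ (Ioo l u)) (hsupp : support ρ ⊆ Ioo l u)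
    (hint : Integrable fun y => y * ρ y) (hmean : ∫ y in Ioo l u, y * ρ y = 0)
    (hψ : Integrable (ψ ∘ X) P)
    (hIBP : ∀ g G : ℝ → ℝ, Continuous g → HasCompactSupport g →
      (∀ x, HasDerivAt G (g x) x) → ∫ ω, g (X ω) * ψ (X ω) ∂P = ∫ ω, X ω * G (X ω) ∂P) :
    ψ ∘ X =ᵐ[P] steinKernel ρ u ∘ X := by
  refine ae_of_ae_map (p := fun y => ψ y = steinKernel ρ u y) hX.aemeasurable ?_
  rw [← integrable_map_measure hψm.aestronglyMeasurable hX.aemeasurable, hlaw] at hψ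
  rw [hlaw]
  refine ae_eq_steinKernel_of_forall_integral_mul_eq hlu hρ hρc hsupp hint hmean hψ
    fun g G hg hgs hG => ?_
  have hGc : Continuous G := continuous_iff_continuousAt.2 fun x => (hG x).continuousAt
  rw [← hlaw, integral_map (f := fun y => g y * ψ y) hX.aemeasurable
      (hg.measurable.mul hψm).aestronglyMeasurable,
    integral_map (f := fun y => y * G y) hX.aemeasurable
      (measurable_id.mul hGc.measurable).aestronglyMeasurable]
  exact hIBP g G hg hgs hG

end SteinKernel

theorem stmt11_general {Ω : Type*} [MeasureSpace Ω]
    (hP : IsProbabilityMeasure (volume : Measure Ω))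
    (X Z gX gZ : Ω → ℝ) (ρ : ℝ → ℝ) (l u : ℝ) (hl : l < 0) (hu : 0 < u)
    (hXmeas : Measurable X) (hZmeas : Measurable Z)
    (hgXmeas : Measurable gX) (hgZmeas : Measurable gZ)
    (hlaw : Measure.map X (volume : Measure Ω) = Measure.map Z volume)
    (hρcont : ContinuousOn ρ (Ioo l u))
    (hρpos : ∀ z ∈ Ioo l u, 0 < ρ z)
    (hρzero : ∀ z ∉ Ioo l u, ρ z = 0)
    (hdens : ∀ s : Set ℝ, MeasurableSet s →
      Measure.map Z (volume : Measure Ω) s = ENNReal.ofReal (∫ y in s, ρ y))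
    (hint : IntegrableOn (fun y => y * ρ y) (Ioo l u))
    (hmean : (∫ y in Ioo l u, y * ρ y) = 0)
    (ψ : ℝ → ℝ) (hψ : Measurable ψ) (hgX : gX = fun ω => ψ (X ω))
    (hIBP : ∀ f F : ℝ → ℝ, Continuous f → HasCompactSupport f →
      (∀ x, HasDerivAt F (f x) x) →
      (∫ ω, f (X ω) * gX ω) = ∫ ω, X ω * F (X ω))
    (hgZdef : gZ =ᵐ[volume] fun ω => (∫ y in Ioo (Z ω) u, y * ρ y) / ρ (Z ω))
    (hgXsq : Integrable (fun ω => (gX ω) ^ 2)) :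
    (gX =ᵐ[volume] fun ω => (∫ y in Ioo (X ω) u, y * ρ y) / ρ (X ω)) ∧
    Measure.map gX (volume : Measure Ω) = Measure.map gZ volume ∧
    (∫ ω, (gX ω) ^ 2) = ∫ ω, (gZ ω) ^ 2 := by
  subst hgX
  have hρ : 0 ≤ ρ := fun z =>
    if hz : z ∈ Ioo l u then (hρpos z hz).le else (hρzero z hz).ge
  have hsupp : support ρ ⊆ Ioo l u := support_subset_iff'.2 hρzero
  have hint' : Integrable fun y => y * ρ y :=
    (integrableOn_iff_integrable_of_support_subset
      ((support_mul_subset_right _ _).trans hsupp)).1 hint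
  have hlawX : volume.map X = volume.withDensity fun y => ENNReal.ofReal (ρ y) := by
    have := Measure.isProbabilityMeasure_map (μ := volume) hZmeas.aemeasurable
    rw [hlaw]
    exact eq_withDensity_ofReal_of_forall_apply_eq hρ hdens
  have hgXeq : ψ ∘ X =ᵐ[volume] steinKernel ρ u ∘ X :=
    comp_ae_eq_steinKernel_comp hXmeas hψ hlawX (hl.trans hu).le hρ hρcont hsupp hint' hmean
      (((memLp_two_iff_integrable_sq hgXmeas.aestronglyMeasurable).2 hgXsq).integrable
        one_le_two) hIBP
  have hρm : Measurable ρ := hρcont.measurable_of_support_subset measurableSet_Ioo hsupp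
  have hid : IdentDistrib (ψ ∘ X) gZ :=
    (IdentDistrib.of_ae_eq hgXmeas.aemeasurable hgXeq).trans
      ((IdentDistrib.comp ⟨hXmeas.aemeasurable, hZmeas.aemeasurable, hlaw⟩
        (measurable_steinKernel hρm hint' hsupp)).trans
        (IdentDistrib.of_ae_eq hgZmeas.aemeasurable hgZdef).symm)
  exact ⟨hgXeq, hid.map_eq, (hid.comp (measurable_id.pow_const 2)).integral_eq⟩

/-- If `X` has the same law as `Z` (centered, with continuous
density `ρ_*` on `(l,u)`), and `g_X` is `X`-measurable and satisfies the
integration-by-parts identity `E[f(X) g_X] = E[X F(X)]` for continuous,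
compactly supported `f` with antiderivative `F`, then
`g_X = (∫_X^u y ρ_*(y) dy)/ρ_*(X)` a.s.; in particular `g_X` has the same law
as `g_Z`, and `E[g_X²] = E[g_Z²]`. -/
theorem stmt11 {Ω : Type*} [MeasureSpace Ω]
    (hP : IsProbabilityMeasure (volume : Measure Ω))
    (X Z gX gZ : Ω → ℝ) (ρ : ℝ → ℝ) (l u : ℝ) (hl : l < 0) (hu : 0 < u)
    (hXmeas : Measurable X) (hZmeas : Measurable Z)
    (hgXmeas : Measurable gX) (hgZmeas : Measurable gZ)
    (hlaw : Measure.map X (volume : Measure Ω) = Measure.map Z volume)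
    (hρcont : ContinuousOn ρ (Ioo l u))
    (hρpos : ∀ z ∈ Ioo l u, 0 < ρ z)
    (hρzero : ∀ z ∉ Ioo l u, ρ z = 0)
    (hdens : ∀ s : Set ℝ, MeasurableSet s →
      Measure.map Z (volume : Measure Ω) s = ENNReal.ofReal (∫ y in s, ρ y))
    (hint : IntegrableOn (fun y => y * ρ y) (Ioo l u))
    (hmean : (∫ y in Ioo l u, y * ρ y) = 0)
    (ψ : ℝ → ℝ) (hψ : Measurable ψ) (hgX : gX = fun ω => ψ (X ω))
    (hIBP : ∀ f F : ℝ → ℝ, Continuous f → HasCompactSupport f →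
      (∀ x, HasDerivAt F (f x) x) →
      (∫ ω, f (X ω) * gX ω) = ∫ ω, X ω * F (X ω))
    (hgZdef : gZ =ᵐ[volume] fun ω => (∫ y in Ioo (Z ω) u, y * ρ y) / ρ (Z ω))
    (hgXsq : Integrable (fun ω => (gX ω) ^ 2))
    (hgZsq : Integrable (fun ω => (gZ ω) ^ 2)) :
    (gX =ᵐ[volume] fun ω => (∫ y in Ioo (X ω) u, y * ρ y) / ρ (X ω)) ∧
    Measure.map gX (volume : Measure Ω) = Measure.map gZ volume ∧
    (∫ ω, (gX ω) ^ 2) = ∫ ω, (gZ ω) ^ 2 :=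
  stmt11_general hP X Z gX gZ ρ l u hl hu hXmeas hZmeas hgXmeas hgZmeas hlaw hρcont hρpos hρzero
    hdens hint hmean ψ hψ hgX hIBP hgZdef hgXsq
end

section
/- Let e_k be an orthonormal system of H and let f = K_s^{⊗a} ⊗̃ K_t^{⊗(n-a)} and g = K_u^{⊗b} ⊗̃ K_v^{⊗(n-b)} be symmetrized tensor powers of unit-norm-free elements K_s,K_t,K_u,K_v ∈ H with pairwise inner products C_{xy} = ⟨K_x,K_y⟩_H. Then ⟨f,g⟩_{H^{⊗n}} = (1/(C(n,a)C(n,b))) Σ_p multinomial(n; p, a-p, b-p, n-a-b+p) · C_{su}^p C_{sv}^{a-p} C_{tu}^{b-p} C_{tv}^{n-a-b+p}, summing over max(0,a+b-n) ≤ p ≤ min(a,b). -/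
/-!
The double sum is `n!` times the permanent of the matrix `M r c = ⟨K r, K' c⟩`, which is
constant on the four blocks cut out by `A = {r < a}` and `B = {c < b}`. A permutation `π`
contributes `C_su^p C_sv^(a-p) C_tu^(b-p) C_tv^(n+p-a-b)` with `p = #(π⁻¹ A ∩ B)`. Sorting the
permutations by `S = π⁻¹ A`, each `a`-set `S` arises from `a! (n-a)!` permutations, and exactly
`C(b, p) C(n-b, a-p)` of the `a`-sets meet `B` in `p` points.
-/

open Finset Matrix Equiv Nat

section Counting

variable {ι κ M : Type*} [AddCommMonoid M] [DecidableEq κ]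

theorem sum_comp_eq_sum_card_fiber_nsmul {s : Finset ι} {t : Finset κ} {g : ι → κ}
    (h : ∀ i ∈ s, g i ∈ t) (f : κ → M) :
    ∑ i ∈ s, f (g i) = ∑ j ∈ t, #{i ∈ s | g i = j} • f j := by
  rw [← sum_fiberwise_of_maps_to' h]
  simp only [sum_const]

variable {α : Type*} [Fintype α] [DecidableEq α]

theorem card_inter_mem_Icc (S B : Finset α) :
    #(S ∩ B) ∈ Icc (#S + #B - Fintype.card α) (min #S #B) := by
  have := card_union_add_card_inter S B
  have := card_le_univ (S ∪ B)
  rw [mem_Icc, le_min_iff]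
  exact ⟨by omega, card_le_card inter_subset_left, card_le_card inter_subset_right⟩

theorem union_inter_eq_and_union_sdiff_eq {T U B : Finset α} (hTB : T ⊆ B) (hUB : U ⊆ Bᶜ) :
    (T ∪ U) ∩ B = T ∧ (T ∪ U) \ B = U := by
  constructor <;> ext j <;> have := @hTB j <;> have := @hUB j <;>
    simp only [mem_inter, mem_union, mem_sdiff, mem_compl] at * <;> tauto

theorem card_powersetCard_filter_card_inter (B : Finset α) {a p : ℕ} (hpa : p ≤ a) :
    #{S ∈ powersetCard a univ | #(S ∩ B) = p} =
      (#B).choose p * (Fintype.card α - #B).choose (a - p) := by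
  rw [← card_compl, ← card_powersetCard, ← card_powersetCard, ← card_product]
  refine card_nbij' (fun S => (S ∩ B, S \ B)) (fun TU => TU.1 ∪ TU.2) ?_ ?_ ?_ ?_
  · intro S hS
    simp only [coe_filter, mem_powersetCard, subset_univ, true_and, Set.mem_ofPred_eq] at hS
    simp only [coe_product, Set.mem_prod, mem_coe, mem_powersetCard, inter_subset_right, true_and]
    refine ⟨hS.2, fun j => by simp +contextual, ?_⟩
    rw [card_sdiff, inter_comm, hS.1, hS.2]
  · rintro ⟨T, U⟩ hTU
    simp only [coe_product, Set.mem_prod, mem_coe, mem_powersetCard] at hTU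
    obtain ⟨⟨hTB, hT⟩, hUB, hU⟩ := hTU
    have hdisj : Disjoint T U :=
      disjoint_of_subset_left hTB (subset_compl_iff_disjoint_left.mp hUB)
    simp only [coe_filter, mem_powersetCard, subset_univ, true_and, Set.mem_ofPred_eq,
      (union_inter_eq_and_union_sdiff_eq hTB hUB).1, card_union_of_disjoint hdisj]
    omega
  · intro S _
    exact (union_comm _ _).trans (sdiff_union_inter S B)
  · rintro ⟨T, U⟩ hTU
    simp only [coe_product, Set.mem_prod, mem_coe, mem_powersetCard] at hTU
    obtain ⟨hinter, hsdiff⟩ := union_inter_eq_and_union_sdiff_eq hTU.1.1 hTU.2.1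
    simp only [hinter, hsdiff]

def permPreimageEquiv (A S : Finset α) :
    {π : Perm α // ∀ j, π j ∈ A ↔ j ∈ S} ≃ (S ≃ A) × ({j // j ∉ S} ≃ {i // i ∉ A}) where
  toFun π := (π.1.subtypeEquiv fun j => (π.2 j).symm,
    π.1.subtypeEquiv fun j => not_congr (π.2 j).symm)
  invFun e := ⟨subtypeCongr e.1 e.2, fun j => by
    by_cases h : j ∈ S <;> simp [subtypeCongr, h, (e.2 ⟨j, _⟩).2]⟩
  left_inv π := by ext j; by_cases h : j ∈ S <;> simp [subtypeCongr, h]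
  right_inv e := by ext j <;> simp [subtypeCongr]

theorem card_perm_map_symm_eq {A S : Finset α} (hSA : #S = #A) :
    #{π : Perm α | A.map π.symm.toEmbedding = S} = (#A)! * (Fintype.card α - #A)! := by
  have hS : Fintype.card S = #A := by rw [Fintype.card_coe, hSA]
  have hSc : Fintype.card {j // j ∉ S} = Fintype.card α - #A := by
    rw [Fintype.card_subtype_compl, hS]
  have hAc : Fintype.card {i // i ∉ A} = Fintype.card α - #A := by
    rw [Fintype.card_subtype_compl, Fintype.card_coe]
  have hmem : ∀ π : Perm α, A.map π.symm.toEmbedding = S ↔ ∀ j, π j ∈ A ↔ j ∈ S := by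
    simp [Finset.ext_iff, mem_map_equiv]
  simp_rw [hmem, ← Fintype.card_subtype]
  rw [Fintype.card_congr (permPreimageEquiv A S), Fintype.card_prod,
    Fintype.card_equiv (Fintype.equivOfCardEq (hS.trans (Fintype.card_coe A).symm)),
    Fintype.card_equiv (Fintype.equivOfCardEq (hSc.trans hAc.symm)), hS, hSc]

end Counting

section Permanent

variable {α R : Type*} [Fintype α] [DecidableEq α] [CommSemiring R]

theorem sum_perm_sum_perm_prod_eq_factorial_mul_permanent (f : α → α → R) :
    ∑ σ : Perm α, ∑ τ : Perm α, ∏ i, f (σ i) (τ i) =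
      (Fintype.card α)! * (of f).permanent := by
  have h : ∀ σ : Perm α, ∑ τ : Perm α, ∏ i, f (σ i) (τ i) = (of f).permanent := fun σ => by
    rw [← permanent_transpose, ← permanent_permute_rows σ]
    rfl
  simp only [h, sum_const, Finset.card_univ, Fintype.card_perm, nsmul_eq_mul]

theorem prod_ite_mem_ite_mem (S B : Finset α) (w x y z : R) :
    ∏ j, (if j ∈ S then (if j ∈ B then w else x) else (if j ∈ B then y else z)) =
      w ^ #(S ∩ B) * x ^ (#S - #(S ∩ B)) * y ^ (#B - #(S ∩ B)) *
        z ^ (Fintype.card α + #(S ∩ B) - #S - #B) := by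
  have hBS : univ \ S ∩ B = B \ S := by ext; simp [and_comm]
  have hcompl : (univ \ S) \ B = (S ∪ B)ᶜ := by ext; simp
  have hcard : #(S ∪ B)ᶜ = Fintype.card α + #(S ∩ B) - #S - #B := by
    have := card_union_add_card_inter S B
    have := card_le_univ (S ∪ B)
    rw [card_compl]
    omega
  simp only [prod_ite, filter_mem_eq_inter, filter_notMem_eq_sdiff, prod_const, hBS, hcompl,
    univ_inter, mul_assoc, hcard, card_sdiff, inter_comm B S]

def blockConstMatrix (A B : Finset α) (w x y z : R) : Matrix α α R :=
  of fun r c => if r ∈ A then (if c ∈ B then w else x) else (if c ∈ B then y else z)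

theorem prod_blockConstMatrix_perm_apply (A B : Finset α) (w x y z : R) (π : Perm α) :
    ∏ j, blockConstMatrix A B w x y z (π j) j =
      ∏ j, (if j ∈ A.map π.symm.toEmbedding then (if j ∈ B then w else x)
        else (if j ∈ B then y else z)) := by
  simp [blockConstMatrix, mem_map_equiv]

theorem permanent_blockConstMatrix (A B : Finset α) (w x y z : R) :
    (blockConstMatrix A B w x y z).permanent =
      ∑ p ∈ Icc (#A + #B - Fintype.card α) (min #A #B),
        ((#B).choose p * (Fintype.card α - #B).choose (#A - p) *
            ((#A)! * (Fintype.card α - #A)!) : ℕ) *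
          (w ^ p * x ^ (#A - p) * y ^ (#B - p) * z ^ (Fintype.card α + p - #A - #B)) := by
  set G : ℕ → R := fun p =>
    w ^ p * x ^ (#A - p) * y ^ (#B - p) * z ^ (Fintype.card α + p - #A - #B)
  have hterm (π : Perm α) :
      ∏ j, blockConstMatrix A B w x y z (π j) j = G #(A.map π.symm.toEmbedding ∩ B) := by
    rw [prod_blockConstMatrix_perm_apply, prod_ite_mem_ite_mem, card_map]
  have hpreimage : ∀ π ∈ (univ : Finset (Perm α)),
      A.map π.symm.toEmbedding ∈ powersetCard #A univ := by
    simp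
  have hinter : ∀ S ∈ powersetCard #A univ,
      #(S ∩ B) ∈ Icc (#A + #B - Fintype.card α) (min #A #B) := by
    intro S hS
    simpa only [(mem_powersetCard.mp hS).2] using card_inter_mem_Icc S B
  calc (blockConstMatrix A B w x y z).permanent
      = ∑ π : Perm α, G #(A.map π.symm.toEmbedding ∩ B) := sum_congr rfl fun π _ => hterm π
    _ = ∑ S ∈ powersetCard #A univ,
          #{π : Perm α | A.map π.symm.toEmbedding = S} • G #(S ∩ B) :=
        sum_comp_eq_sum_card_fiber_nsmul hpreimage fun S => G #(S ∩ B)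
    _ = ∑ S ∈ powersetCard #A univ, ((#A)! * (Fintype.card α - #A)!) • G #(S ∩ B) :=
        sum_congr rfl fun S hS => by rw [card_perm_map_symm_eq (mem_powersetCard.mp hS).2]
    _ = ∑ p ∈ Icc (#A + #B - Fintype.card α) (min #A #B),
          #{S ∈ powersetCard #A univ | #(S ∩ B) = p} •
            ((#A)! * (Fintype.card α - #A)!) • G p :=
        sum_comp_eq_sum_card_fiber_nsmul hinter fun p => ((#A)! * (Fintype.card α - #A)!) • G p
    _ = _ := sum_congr rfl fun p hp => by
        rw [card_powersetCard_filter_card_inter B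
          ((mem_Icc.mp hp).2.trans (min_le_left _ _)), smul_smul, nsmul_eq_mul]

end Permanent

theorem cast_choose_mul_choose_mul_factorial_div_factorial {K : Type*} [Field K] [CharZero K]
    {n a b p : ℕ} (hpa : p ≤ a) (hpb : p ≤ b) (hbn : b ≤ n) (habp : a + b ≤ n + p) :
    ((b.choose p * (n - b).choose (a - p) * (a ! * (n - a)!) : ℕ) : K) / n ! =
      1 / ((n.choose a : K) * n.choose b) *
        (n ! / (p ! * (a - p)! * (b - p)! * (n + p - a - b)!)) := by
  have hsub : n - b - (a - p) = n + p - a - b := by omega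
  push_cast
  rw [cast_choose K hpb, cast_choose K (show a - p ≤ n - b by omega), hsub,
    cast_choose K (show a ≤ n by omega), cast_choose K hbn]
  field_simp

/-- The inner product of the symmetrized tensor powers
`K_s^{⊗a} ⊗̃ K_t^{⊗(n-a)}` and `K_u^{⊗b} ⊗̃ K_v^{⊗(n-b)}` — written out via the
formula `⟨x₁⊗̃⋯⊗̃xₙ, y₁⊗̃⋯⊗̃yₙ⟩ = (1/n!²) Σ_{σ,τ} Π_i ⟨x_{σ(i)}, y_{τ(i)}⟩` —
equals `(1/(C(n,a)C(n,b))) Σ_p (n; p, a-p, b-p, n-a-b+p) C_{su}^p C_{sv}^{a-p}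
C_{tu}^{b-p} C_{tv}^{n-a-b+p}`, summing over `max(0,a+b-n) ≤ p ≤ min(a,b)`. -/
theorem stmt15 {H : Type*} [NormedAddCommGroup H] [InnerProductSpace ℝ H]
    (Ks Kt Ku Kv : H) (n a b : ℕ) (ha : a ≤ n) (hb : b ≤ n) :
    (1 / ((n.factorial : ℝ)) ^ 2) *
      ∑ σ : Equiv.Perm (Fin n), ∑ τ : Equiv.Perm (Fin n),
        ∏ i : Fin n,
          (inner ℝ ((if (σ i : ℕ) < a then Ks else Kt))
                 ((if (τ i : ℕ) < b then Ku else Kv)) : ℝ) =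
    (1 / ((n.choose a : ℝ) * (n.choose b : ℝ))) *
      ∑ p ∈ Finset.Icc (a + b - n) (min a b),
        ((n.factorial : ℝ) /
            ((p.factorial : ℝ) * ((a - p).factorial : ℝ) *
              ((b - p).factorial : ℝ) * ((n + p - a - b).factorial : ℝ))) *
          (inner ℝ Ks Ku : ℝ) ^ p * (inner ℝ Ks Kv : ℝ) ^ (a - p) *
          (inner ℝ Kt Ku : ℝ) ^ (b - p) * (inner ℝ Kt Kv : ℝ) ^ (n + p - a - b) := by
  set A : Finset (Fin n) := {i | (i : ℕ) < a}
  set B : Finset (Fin n) := {i | (i : ℕ) < b}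
  have hA : #A = a := by rw [Fin.card_filter_val_lt, min_eq_right ha]
  have hB : #B = b := by rw [Fin.card_filter_val_lt, min_eq_right hb]
  have hM : of (fun r c : Fin n => (inner ℝ (if (r : ℕ) < a then Ks else Kt)
        (if (c : ℕ) < b then Ku else Kv) : ℝ)) =
      blockConstMatrix A B (inner ℝ Ks Ku) (inner ℝ Ks Kv) (inner ℝ Kt Ku) (inner ℝ Kt Kv) := by
    ext r c
    simp only [of_apply, blockConstMatrix, A, B, mem_filter, mem_univ, true_and]
    split_ifs <;> rfl
  rw [sum_perm_sum_perm_prod_eq_factorial_mul_permanent fun r c : Fin n =>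
      (inner ℝ (if (r : ℕ) < a then Ks else Kt) (if (c : ℕ) < b then Ku else Kv) : ℝ),
    hM, permanent_blockConstMatrix, hA, hB, Fintype.card_fin, mul_sum, mul_sum, mul_sum]
  refine sum_congr rfl fun p hp => ?_
  obtain ⟨hlo, hhi⟩ := mem_Icc.mp hp
  have hscale : 1 / (n ! : ℝ) ^ 2 * n ! = 1 / n ! := by field_simp
  rw [← mul_assoc, hscale, ← mul_assoc, one_div_mul_eq_div,
    cast_choose_mul_choose_mul_factorial_div_factorial (hhi.trans (min_le_left a b))
      (hhi.trans (min_le_right a b)) hb (by omega)]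
  ring
end

section
/- Let X_t = B^H_{t+1} - B^H_t be the increment process of fractional Brownian motion with Hurst index H ∈ (1/2,1), with covariance C(t) = E[X_0 X_t]. Fix P ≥ 2 and nonnegative integer exponents ε(s_i,s_j) for pairs of variables s = (s_1,…,s_P) summing to S. Define L(T) = T^{-PH} ∫_{[0,T]^P} Π_{i≠j} |C(|s_i - s_j|)|^{ε(s_i,s_j)} ds. If S > P/2 then L(T) → 0 as T → ∞, and if S = P/2 then limsup_{T→∞} L(T) < ∞. -/
open MeasureTheory Set Filter ENNReal

section Aux

lemma prod_rpow_sum' {ι : Type*} (s : Finset ι) {b : ℝ} (hb : 0 < b) (f : ι → ℝ) :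
    ∏ i ∈ s, b ^ f i = b ^ (∑ i ∈ s, f i) := by
  classical
  induction s using Finset.cons_induction with
  | empty => simp
  | cons i s hi ih => rw [Finset.prod_cons, Finset.sum_cons, ih, ← Real.rpow_add hb]

lemma ofReal_prod_nonneg {ι : Type*} (s : Finset ι) (f : ι → ℝ) (hf : ∀ i ∈ s, 0 ≤ f i) :
    ENNReal.ofReal (∏ i ∈ s, f i) = ∏ i ∈ s, ENNReal.ofReal (f i) := by
  classical
  induction s using Finset.cons_induction with
  | empty => simp
  | cons i s hi ih =>
    rw [Finset.prod_cons, Finset.prod_cons,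
      ENNReal.ofReal_mul (hf i (Finset.mem_cons_self i s)),
      ih fun j hj => hf j (Finset.mem_cons_of_mem hj)]

lemma pi_restrict_aux {ι : Type*} [Fintype ι] (T : ℝ) :
    (volume : Measure (ι → ℝ)).restrict (Set.pi Set.univ fun _ => Icc (0:ℝ) T)
      = Measure.pi (fun _ : ι => (volume : Measure ℝ).restrict (Icc 0 T)) := by
  refine (Measure.pi_eq fun t ht => ?_).symm
  rw [Measure.restrict_apply (MeasurableSet.univ_pi ht), ← Set.pi_inter_distrib,
    volume_pi, Measure.pi_pi]
  exact Finset.prod_congr rfl fun i _ => (Measure.restrict_apply (ht i)).symm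

lemma lintegral_pair {P : ℕ} (μ : Measure ℝ) [IsFiniteMeasure μ] (i j : Fin P) (hij : i ≠ j)
    (h : ℝ → ℝ → ℝ≥0∞) (hh : Measurable (Function.uncurry h)) :
    ∫⁻ s, h (s i) (s j) ∂(Measure.pi fun _ : Fin P => μ)
      = μ Set.univ ^ (P - 2) * ∫⁻ x, ∫⁻ y, h x y ∂μ ∂μ := by
  classical
  set F : (Fin P → ℝ) → ℝ≥0∞ := fun s => h (s i) (s j) with hFdef
  have hF : Measurable F := by
    have : F = (Function.uncurry h) ∘ (fun s : Fin P → ℝ => (s i, s j)) := rfl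
    rw [this]
    exact hh.comp ((measurable_pi_apply i).prodMk (measurable_pi_apply j))
  have hμ : μ Set.univ ≠ ∞ := measure_ne_top μ _
  have key : ∀ s : Finset (Fin P), i ∉ s → j ∉ s → ∀ x,
      (∫⋯∫⁻_s, F ∂fun _ => μ) x = μ Set.univ ^ s.card * F x := by
    intro s
    induction s using Finset.induction_on with
    | empty => intro _ _ x; simp
    | @insert k s hk ih =>
      intro hi hj x
      have hki : k ≠ i := fun h => hi (h ▸ Finset.mem_insert_self k s)
      have hkj : k ≠ j := fun h => hj (h ▸ Finset.mem_insert_self k s)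
      rw [MeasureTheory.lmarginal_insert _ hF hk]
      have : ∀ y : ℝ, (∫⋯∫⁻_s, F ∂fun _ => μ) (Function.update x k y)
          = μ Set.univ ^ s.card * F x := by
        intro y
        rw [ih (fun h => hi (Finset.mem_insert_of_mem h))
          (fun h => hj (Finset.mem_insert_of_mem h))]
        congr 1
        simp [hFdef, Function.update_of_ne hki.symm, Function.update_of_ne hkj.symm]
      simp_rw [this]
      rw [lintegral_const, Finset.card_insert_of_notMem hk, pow_succ]
      ring
  have hdisj : Disjoint ({i, j} : Finset (Fin P)) ({i, j}ᶜ) := disjoint_compl_right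
  have huniv : (Finset.univ : Finset (Fin P)) = ({i, j} : Finset (Fin P)) ∪ ({i, j}ᶜ) :=
    (Finset.union_compl _).symm
  rw [MeasureTheory.lintegral_eq_lmarginal_univ (fun _ => (0:ℝ)), huniv,
    MeasureTheory.lmarginal_union _ F hF hdisj]
  have hij' : i ∉ ({j} : Finset (Fin P)) := by simp [hij]
  rw [show ({i, j} : Finset (Fin P)) = insert i {j} from rfl,
    MeasureTheory.lmarginal_insert _ (hF.lmarginal _) hij']
  have hcard : ({i, j}ᶜ : Finset (Fin P)).card = P - 2 := by
    rw [Finset.card_compl, Finset.card_insert_of_notMem (by simp [hij]),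
      Finset.card_singleton, Fintype.card_fin]
  have step : ∀ x : Fin P → ℝ,
      (∫⋯∫⁻_{j}, (∫⋯∫⁻_({i,j}ᶜ), F ∂fun _ => μ) ∂fun _ => μ) x
        = ∫⁻ b, μ Set.univ ^ (P - 2) * h (x i) b ∂μ := by
    intro x
    rw [MeasureTheory.lmarginal_singleton]
    refine lintegral_congr fun b => ?_
    rw [key _ (by simp [hij]) (by simp) _, hcard]
    show _ * F (Function.update x j b) = _ * h (x i) b
    congr 1
    simp only [hFdef]
    rw [Function.update_of_ne hij, Function.update_self]
  simp_rw [step]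
  have : ∀ a : ℝ, ∫⁻ b, μ Set.univ ^ (P - 2) * h ((Function.update (fun _ => (0:ℝ)) i a) i) b ∂μ
      = μ Set.univ ^ (P - 2) * ∫⁻ b, h a b ∂μ := by
    intro a
    rw [Function.update_self, lintegral_const_mul' _ _ (pow_ne_top hμ)]
  simp_rw [this]
  rw [lintegral_const_mul' _ _ (pow_ne_top hμ)]

lemma Dbound (Hu : ℝ) (C : ℝ → ℝ) (hCcont : Continuous C)
    (hC : ∀ e : ℕ, 1 ≤ e → ∃ K : ℝ, ∀ T : ℝ, 1 ≤ T →
      (∫ s in Icc (0 : ℝ) T, ∫ t in Icc (0 : ℝ) T, |C (|s - t|)| ^ e) ≤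
        K * T ^ (2 * Hu) / T ^ ((2 - 2 * Hu) * ((e : ℝ) - 1)))
    (e : ℕ) :
    ∃ K : ℝ, 0 ≤ K ∧ ∀ T : ℝ, 1 ≤ T →
      (∫⁻ x in Icc (0:ℝ) T, ∫⁻ y in Icc (0:ℝ) T, ENNReal.ofReal (|C (|x - y|)| ^ e))
        ≤ ENNReal.ofReal (K * T ^ (2 - (2 - 2*Hu) * (e:ℝ))) := by
  have hg : Continuous fun p : ℝ × ℝ => |C (|p.1 - p.2|)| ^ e :=
    ((hCcont.comp (continuous_abs.comp (continuous_fst.sub continuous_snd))).abs).pow e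
  rcases Nat.eq_zero_or_pos e with he | he
  · refine ⟨1, zero_le_one, fun T hT => ?_⟩
    have hT0 : (0:ℝ) ≤ T := le_trans zero_le_one hT
    subst he
    simp only [pow_zero, Nat.cast_zero, mul_zero, sub_zero, ofReal_one, lintegral_one,
      Measure.restrict_apply, MeasurableSet.univ, univ_inter, one_mul]
    rw [Real.volume_Icc, sub_zero]
    rw [lintegral_const, Measure.restrict_apply MeasurableSet.univ, univ_inter,
      Real.volume_Icc, sub_zero, ← ENNReal.ofReal_mul hT0]
    refine ENNReal.ofReal_le_ofReal ?_
    rw [show (2:ℝ) = ((2:ℕ):ℝ) by norm_num, Real.rpow_natCast]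
    nlinarith
  · obtain ⟨K, hK⟩ := hC e he
    refine ⟨|K|, abs_nonneg K, fun T hT => ?_⟩
    have hT0 : (0:ℝ) < T := lt_of_lt_of_le zero_lt_one hT
    set μ := (volume : Measure ℝ).restrict (Icc (0:ℝ) T) with hμdef
    have hfin : ∀ x : ℝ, (∫⁻ y, ENNReal.ofReal (|C (|x - y|)| ^ e) ∂μ) ≠ ∞ := by
      intro x
      have hint : IntegrableOn (fun y => |C (|x - y|)| ^ e) (Icc (0:ℝ) T) := by
        exact (hg.comp (Continuous.prodMk_right x)).integrableOn_Icc
      exact hint.lintegral_lt_top.ne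
    have hinner : ∀ x : ℝ, (∫ y in Icc (0:ℝ) T, |C (|x - y|)| ^ e)
        = (∫⁻ y, ENNReal.ofReal (|C (|x - y|)| ^ e) ∂μ).toReal := by
      intro x
      rw [integral_eq_lintegral_of_nonneg_ae]
      · exact Eventually.of_forall fun y => by positivity
      · exact ((hg.comp (Continuous.prodMk_right x)).aestronglyMeasurable)
    have hmeasInner : Measurable fun x => ∫⁻ y, ENNReal.ofReal (|C (|x - y|)| ^ e) ∂μ := by
      exact Measurable.lintegral_prod_right'
        (f := fun p : ℝ × ℝ => ENNReal.ofReal (|C (|p.1 - p.2|)| ^ e))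
        (ENNReal.continuous_ofReal.comp hg).measurable
    have houter : (∫ x in Icc (0:ℝ) T, ∫ y in Icc (0:ℝ) T, |C (|x - y|)| ^ e)
        = (∫⁻ x, ∫⁻ y, ENNReal.ofReal (|C (|x - y|)| ^ e) ∂μ ∂μ).toReal := by
      rw [integral_eq_lintegral_of_nonneg_ae]
      · congr 1
        refine lintegral_congr fun x => ?_
        rw [hinner x, ENNReal.ofReal_toReal (hfin x)]
      · exact Eventually.of_forall fun x => integral_nonneg fun y => by positivity
      · exact (hmeasInner.ennreal_toReal.aestronglyMeasurable).congr
          (Eventually.of_forall fun x => (hinner x).symm)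
    have hM : ∃ M : ℝ, ∀ u ∈ Icc (0:ℝ) T, |C u| ≤ M := by
      obtain ⟨M, hM⟩ := (isCompact_Icc (a := (0:ℝ)) (b := T)).exists_bound_of_continuousOn
        (hCcont.abs.continuousOn)
      exact ⟨M, fun u hu => by simpa using (hM u hu)⟩
    obtain ⟨M, hM⟩ := hM
    have hDfin : (∫⁻ x, ∫⁻ y, ENNReal.ofReal (|C (|x - y|)| ^ e) ∂μ ∂μ) ≠ ∞ := by
      have hb : ∀ x ∈ Icc (0:ℝ) T, (∫⁻ y, ENNReal.ofReal (|C (|x - y|)| ^ e) ∂μ)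
          ≤ ENNReal.ofReal (M ^ e) * ENNReal.ofReal T := by
        intro x hx
        have : (∫⁻ y, ENNReal.ofReal (|C (|x - y|)| ^ e) ∂μ)
            ≤ ∫⁻ _, ENNReal.ofReal (M ^ e) ∂μ := by
          refine setLIntegral_mono' measurableSet_Icc fun y hy => ?_
          refine ENNReal.ofReal_le_ofReal (pow_le_pow_left₀ (abs_nonneg _) ?_ e)
          refine hM _ ⟨abs_nonneg _, ?_⟩
          rw [abs_sub_le_iff]
          constructor <;> [linarith [hx.1, hx.2, hy.1, hy.2]; linarith [hx.1, hx.2, hy.1, hy.2]]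
        refine this.trans ?_
        rw [lintegral_const, hμdef, Measure.restrict_apply MeasurableSet.univ, univ_inter,
          Real.volume_Icc, sub_zero]
      have : (∫⁻ x, ∫⁻ y, ENNReal.ofReal (|C (|x - y|)| ^ e) ∂μ ∂μ)
          ≤ (ENNReal.ofReal (M ^ e) * ENNReal.ofReal T) * ENNReal.ofReal T := by
        have := setLIntegral_mono' (μ := volume) measurableSet_Icc hb
        refine le_trans ?_ (le_trans this ?_)
        · exact le_of_eq rfl
        · rw [lintegral_const, Measure.restrict_apply MeasurableSet.univ, univ_inter,
            Real.volume_Icc, sub_zero]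
      exact (this.trans_lt (by finiteness)).ne
    have hreal : (∫⁻ x, ∫⁻ y, ENNReal.ofReal (|C (|x - y|)| ^ e) ∂μ ∂μ).toReal
        ≤ |K| * T ^ (2 - (2 - 2*Hu) * (e:ℝ)) := by
      rw [← houter]
      refine (hK T hT).trans ?_
      rw [div_eq_mul_inv, ← Real.rpow_neg (le_of_lt hT0), mul_assoc,
        ← Real.rpow_add hT0]
      have hexp : 2 * Hu + -((2 - 2 * Hu) * ((e:ℝ) - 1)) = 2 - (2 - 2*Hu) * (e:ℝ) := by ring
      rw [hexp]
      exact mul_le_mul_of_nonneg_right (le_abs_self K) (Real.rpow_nonneg (le_of_lt hT0) _)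
    calc (∫⁻ x, ∫⁻ y, ENNReal.ofReal (|C (|x - y|)| ^ e) ∂μ ∂μ)
        = ENNReal.ofReal ((∫⁻ x, ∫⁻ y, ENNReal.ofReal (|C (|x - y|)| ^ e) ∂μ ∂μ).toReal) :=
          (ENNReal.ofReal_toReal hDfin).symm
      _ ≤ _ := ENNReal.ofReal_le_ofReal hreal

end Aux

/-- For the covariance `C` of fBm increments with Hurst index
`Hu ∈ (1/2,1)` (satisfying `∫_{[0,T]²}|C(|s-t|)|^ε dsdt = O(T^{2Hu}/T^{(2-2Hu)(ε-1)})`),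
and nonnegative integer exponents `ε(i,j)` for pairs of `P ≥ 2` variables with
total sum `S`, the quantity
`L(T) = T^{-P·Hu} ∫_{[0,T]^P} Π_{i≠j} |C(|sᵢ-sⱼ|)|^{ε(i,j)} ds` satisfies:
if `S > P/2` then `L(T) → 0` as `T → ∞`, and if `S = P/2` then
`limsup_{T→∞} L(T) < ∞`. -/
theorem stmt16 (Hu : ℝ) (hH1 : 1 / 2 < Hu) (hH2 : Hu < 1)
    (C : ℝ → ℝ) (hCcont : Continuous C)
    (hC : ∀ e : ℕ, 1 ≤ e → ∃ K : ℝ, ∀ T : ℝ, 1 ≤ T →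
      (∫ s in Icc (0 : ℝ) T, ∫ t in Icc (0 : ℝ) T, |C (|s - t|)| ^ e) ≤
        K * T ^ (2 * Hu) / T ^ ((2 - 2 * Hu) * ((e : ℝ) - 1)))
    (P : ℕ) (hP : 2 ≤ P) (ε : Fin P → Fin P → ℕ)
    (L : ℝ → ℝ)
    (hL : ∀ T : ℝ, L T = T ^ (-(P : ℝ) * Hu) *
      ∫ s in Set.pi Set.univ (fun _ : Fin P => Icc (0 : ℝ) T),
        ∏ q ∈ Finset.univ.filter (fun q : Fin P × Fin P => q.1 < q.2),
          |C (|s q.1 - s q.2|)| ^ (ε q.1 q.2))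
    (S : ℕ)
    (hS : S = ∑ q ∈ Finset.univ.filter (fun q : Fin P × Fin P => q.1 < q.2),
      ε q.1 q.2) :
    (2 * S > P → Tendsto L atTop (nhds 0)) ∧
    (2 * S = P → ∃ M : ℝ, ∀ᶠ T in atTop, L T ≤ M) := by
  set pairs : Finset (Fin P × Fin P) :=
    Finset.univ.filter (fun q : Fin P × Fin P => q.1 < q.2) with hpairs
  set Q : ℕ := pairs.card with hQdef
  have hQpos : 0 < Q := by
    refine Finset.card_pos.mpr ⟨(⟨0, by omega⟩, ⟨1, by omega⟩), ?_⟩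
    simp [hpairs, Fin.mk_lt_mk]
  have hQ0 : ((Q:ℝ)) ≠ 0 := Nat.cast_ne_zero.mpr hQpos.ne'
  set β : Fin P × Fin P → ℝ :=
    fun q => 2 - (2 - 2*Hu) * ((ε q.1 q.2 : ℝ) * (Q:ℝ)) with hβ
  have hKex : ∀ q : Fin P × Fin P, ∃ K : ℝ, 0 ≤ K ∧ ∀ T : ℝ, 1 ≤ T →
      (∫⁻ x in Icc (0:ℝ) T, ∫⁻ y in Icc (0:ℝ) T,
        ENNReal.ofReal (|C (|x - y|)| ^ (ε q.1 q.2 * Q)))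
        ≤ ENNReal.ofReal (K * T ^ β q) := by
    intro q
    obtain ⟨K, hK0, hKb⟩ := Dbound Hu C hCcont hC (ε q.1 q.2 * Q)
    refine ⟨K, hK0, fun T hT => ?_⟩
    have hβq : β q = 2 - (2 - 2*Hu) * ((ε q.1 q.2 * Q : ℕ) : ℝ) := by
      simp only [hβ]; push_cast; ring
    rw [hβq]; exact hKb T hT
  choose K hK0 hKb using hKex
  set KK : ℝ := ∏ q ∈ pairs, K q ^ ((Q:ℝ)⁻¹) with hKK
  have hKKnn : 0 ≤ KK := Finset.prod_nonneg fun q _ => Real.rpow_nonneg (hK0 q) _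
  set α : ℝ := (2 - 2*Hu) * ((P:ℝ)/2 - (S:ℝ)) with hα
  have hsumβ : ∑ q ∈ pairs, β q = 2 * (Q:ℝ) - (2 - 2*Hu) * (Q:ℝ) * (S:ℝ) := by
    have hb : ∀ q ∈ pairs, β q = 2 - ((2 - 2*Hu) * (Q:ℝ)) * ((ε q.1 q.2 : ℕ) : ℝ) := by
      intro q _; simp only [hβ]; ring
    rw [Finset.sum_congr rfl hb, Finset.sum_sub_distrib, Finset.sum_const, ← Finset.mul_sum,
      nsmul_eq_mul]
    have hSc : ∑ q ∈ pairs, ((ε q.1 q.2 : ℕ) : ℝ) = (S:ℝ) := by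
      rw [← Nat.cast_sum]
      exact_mod_cast congrArg (fun n : ℕ => (n:ℝ)) hS.symm
    rw [hSc, ← hQdef]
    ring
  -- the main bound
  have main : ∀ T : ℝ, 1 ≤ T → L T ≤ KK * T ^ α := by
    intro T hT
    have hT0 : (0:ℝ) < T := lt_of_lt_of_le zero_lt_one hT
    haveI : IsFiniteMeasure ((volume : Measure ℝ).restrict (Icc (0:ℝ) T)) := by
      constructor
      rw [Measure.restrict_apply MeasurableSet.univ, univ_inter, Real.volume_Icc]
      exact ofReal_lt_top
    have hμuniv : (volume : Measure ℝ).restrict (Icc (0:ℝ) T) Set.univ = ENNReal.ofReal T := by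
      rw [Measure.restrict_apply MeasurableSet.univ, univ_inter, Real.volume_Icc, sub_zero]
    have hmeq : (volume : Measure (Fin P → ℝ)).restrict
          (Set.pi Set.univ fun _ : Fin P => Icc (0:ℝ) T)
        = Measure.pi (fun _ : Fin P => (volume : Measure ℝ).restrict (Icc (0:ℝ) T)) :=
      pi_restrict_aux T
    have hGcont : Continuous fun s : Fin P → ℝ =>
        ∏ q ∈ pairs, |C (|s q.1 - s q.2|)| ^ (ε q.1 q.2) := by
      refine continuous_finset_prod _ fun q _ => ?_
      exact ((hCcont.comp (continuous_abs.comp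
        ((continuous_apply q.1).sub (continuous_apply q.2)))).abs).pow _
    have hGnn : ∀ s : Fin P → ℝ,
        0 ≤ ∏ q ∈ pairs, |C (|s q.1 - s q.2|)| ^ (ε q.1 q.2) :=
      fun s => Finset.prod_nonneg fun q _ => pow_nonneg (abs_nonneg _) _
    have hLT : L T = T ^ (-(P:ℝ) * Hu) *
        (∫⁻ s, ENNReal.ofReal (∏ q ∈ pairs, |C (|s q.1 - s q.2|)| ^ (ε q.1 q.2))
          ∂(Measure.pi (fun _ : Fin P => (volume : Measure ℝ).restrict (Icc (0:ℝ) T)))).toReal := by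
      rw [hL T, hmeq, integral_eq_lintegral_of_nonneg_ae
        (Eventually.of_forall hGnn) hGcont.aestronglyMeasurable]
    -- pointwise Hölder form
    have hof : ∀ s : Fin P → ℝ,
        ENNReal.ofReal (∏ q ∈ pairs, |C (|s q.1 - s q.2|)| ^ (ε q.1 q.2))
          = ∏ q ∈ pairs,
            (ENNReal.ofReal (|C (|s q.1 - s q.2|)|) ^ (ε q.1 q.2 * Q)) ^ ((Q:ℝ)⁻¹) := by
      intro s
      rw [ofReal_prod_nonneg _ _ (fun q _ => pow_nonneg (abs_nonneg _) _)]
      refine Finset.prod_congr rfl fun q _ => ?_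
      rw [ENNReal.ofReal_pow (abs_nonneg _), ← ENNReal.rpow_natCast _ (ε q.1 q.2 * Q),
        ← ENNReal.rpow_mul,
        show ((ε q.1 q.2 * Q : ℕ) : ℝ) * (Q:ℝ)⁻¹ = ((ε q.1 q.2 : ℕ) : ℝ) by
          push_cast; field_simp,
        ENNReal.rpow_natCast]
    have hmeasx : ∀ q : Fin P × Fin P, Measurable fun s : Fin P → ℝ =>
        ENNReal.ofReal (|C (|s q.1 - s q.2|)|) ^ (ε q.1 q.2 * Q) := by
      intro q
      exact ((ENNReal.continuous_ofReal.comp ((hCcont.comp (continuous_abs.comp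
        ((continuous_apply q.1).sub (continuous_apply q.2)))).abs)).measurable).pow_const _
    have hsum1 : ∑ _q ∈ pairs, ((Q:ℝ)⁻¹) = 1 := by
      rw [Finset.sum_const, nsmul_eq_mul, ← hQdef, mul_inv_cancel₀ hQ0]
    have holder : (∫⁻ s, ENNReal.ofReal (∏ q ∈ pairs, |C (|s q.1 - s q.2|)| ^ (ε q.1 q.2))
          ∂(Measure.pi (fun _ : Fin P => (volume : Measure ℝ).restrict (Icc (0:ℝ) T))))
        ≤ ∏ q ∈ pairs,
          (∫⁻ s, ENNReal.ofReal (|C (|s q.1 - s q.2|)|) ^ (ε q.1 q.2 * Q)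
            ∂(Measure.pi (fun _ : Fin P => (volume : Measure ℝ).restrict (Icc (0:ℝ) T))))
              ^ ((Q:ℝ)⁻¹) := by
      simp_rw [hof]
      exact ENNReal.lintegral_prod_norm_pow_le pairs
        (fun q _ => (hmeasx q).aemeasurable) hsum1
        (fun q _ => inv_nonneg.mpr (Nat.cast_nonneg Q))
    have hbnn : ∀ q : Fin P × Fin P, 0 ≤ T ^ (P-2) * (K q * T ^ β q) := fun q =>
      mul_nonneg (pow_nonneg hT0.le _) (mul_nonneg (hK0 q) (Real.rpow_nonneg hT0.le _))
    have hfac : ∀ q ∈ pairs,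
        (∫⁻ s, ENNReal.ofReal (|C (|s q.1 - s q.2|)|) ^ (ε q.1 q.2 * Q)
          ∂(Measure.pi (fun _ : Fin P => (volume : Measure ℝ).restrict (Icc (0:ℝ) T))))
        ≤ ENNReal.ofReal (T ^ (P-2) * (K q * T ^ β q)) := by
      intro q hq
      have hne : q.1 ≠ q.2 := by
        have := (Finset.mem_filter.mp (hpairs ▸ hq)).2
        exact ne_of_lt this
      have hh : Measurable (Function.uncurry
          fun x y : ℝ => ENNReal.ofReal (|C (|x - y|)|) ^ (ε q.1 q.2 * Q)) := by
        exact ((ENNReal.continuous_ofReal.comp ((hCcont.comp (continuous_abs.comp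
          (continuous_fst.sub continuous_snd))).abs)).measurable).pow_const _
      have hpair := lintegral_pair ((volume : Measure ℝ).restrict (Icc (0:ℝ) T)) q.1 q.2 hne
        (fun x y : ℝ => ENNReal.ofReal (|C (|x - y|)|) ^ (ε q.1 q.2 * Q)) hh
      have hD := hKb q T hT
      have hconv : ∀ x y : ℝ, ENNReal.ofReal (|C (|x - y|)| ^ (ε q.1 q.2 * Q))
          = ENNReal.ofReal (|C (|x - y|)|) ^ (ε q.1 q.2 * Q) :=
        fun x y => ENNReal.ofReal_pow (abs_nonneg _) _
      simp_rw [hconv] at hD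
      calc (∫⁻ s, ENNReal.ofReal (|C (|s q.1 - s q.2|)|) ^ (ε q.1 q.2 * Q)
              ∂(Measure.pi (fun _ : Fin P => (volume : Measure ℝ).restrict (Icc (0:ℝ) T))))
          = ((volume : Measure ℝ).restrict (Icc (0:ℝ) T) Set.univ) ^ (P - 2) *
            ∫⁻ x, ∫⁻ y, ENNReal.ofReal (|C (|x - y|)|) ^ (ε q.1 q.2 * Q)
              ∂((volume : Measure ℝ).restrict (Icc (0:ℝ) T))
              ∂((volume : Measure ℝ).restrict (Icc (0:ℝ) T)) := hpair
        _ ≤ (ENNReal.ofReal T) ^ (P - 2) * ENNReal.ofReal (K q * T ^ β q) := by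
            rw [hμuniv]
            exact mul_le_mul_right hD _
        _ = ENNReal.ofReal (T ^ (P-2) * (K q * T ^ β q)) := by
            rw [← ENNReal.ofReal_pow hT0.le,
              ← ENNReal.ofReal_mul (pow_nonneg hT0.le _)]
    have hI : (∫⁻ s, ENNReal.ofReal (∏ q ∈ pairs, |C (|s q.1 - s q.2|)| ^ (ε q.1 q.2))
          ∂(Measure.pi (fun _ : Fin P => (volume : Measure ℝ).restrict (Icc (0:ℝ) T))))
        ≤ ENNReal.ofReal (∏ q ∈ pairs, (T ^ (P-2) * (K q * T ^ β q)) ^ ((Q:ℝ)⁻¹)) := by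
      refine holder.trans ?_
      rw [ofReal_prod_nonneg _ _ (fun q _ => Real.rpow_nonneg (hbnn q) _)]
      refine Finset.prod_le_prod' fun q hq => ?_
      rw [← ENNReal.ofReal_rpow_of_nonneg (hbnn q) (inv_nonneg.mpr (Nat.cast_nonneg Q))]
      exact ENNReal.rpow_le_rpow (hfac q hq) (inv_nonneg.mpr (Nat.cast_nonneg Q))
    have hPcast : ((P - 2 : ℕ) : ℝ) = (P:ℝ) - 2 := by
      rw [Nat.cast_sub hP]; norm_num
    have hprod : ∏ q ∈ pairs, (T ^ (P-2) * (K q * T ^ β q)) ^ ((Q:ℝ)⁻¹)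
        = KK * T ^ (α + (P:ℝ) * Hu) := by
      have hstep : ∀ q ∈ pairs, (T ^ (P-2) * (K q * T ^ β q)) ^ ((Q:ℝ)⁻¹)
          = K q ^ ((Q:ℝ)⁻¹) * T ^ ((((P:ℝ) - 2) + β q) * (Q:ℝ)⁻¹) := by
        intro q _
        have h1 : T ^ (P-2) * (K q * T ^ β q) = K q * T ^ (((P:ℝ) - 2) + β q) := by
          rw [Real.rpow_add hT0, ← Real.rpow_natCast T (P-2), hPcast]
          ring
        rw [h1, Real.mul_rpow (hK0 q) (Real.rpow_nonneg hT0.le _),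
          ← Real.rpow_mul hT0.le]
      rw [Finset.prod_congr rfl hstep, Finset.prod_mul_distrib, ← hKK,
        prod_rpow_sum' pairs hT0]
      congr 1
      rw [← Finset.sum_mul, Finset.sum_add_distrib, Finset.sum_const, hsumβ, ← hQdef,
        nsmul_eq_mul]
      congr 1
      rw [hα]
      field_simp
      ring
    have hRnn : 0 ≤ KK * T ^ (α + (P:ℝ)*Hu) :=
      mul_nonneg hKKnn (Real.rpow_nonneg hT0.le _)
    calc L T = T ^ (-(P:ℝ) * Hu) *
        (∫⁻ s, ENNReal.ofReal (∏ q ∈ pairs, |C (|s q.1 - s q.2|)| ^ (ε q.1 q.2))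
          ∂(Measure.pi (fun _ : Fin P => (volume : Measure ℝ).restrict (Icc (0:ℝ) T)))).toReal :=
          hLT
      _ ≤ T ^ (-(P:ℝ)*Hu) * (KK * T ^ (α + (P:ℝ)*Hu)) := by
          refine mul_le_mul_of_nonneg_left ?_ (Real.rpow_nonneg hT0.le _)
          refine ENNReal.toReal_le_of_le_ofReal hRnn ?_
          rw [← hprod]
          exact hI
      _ = KK * T ^ α := by
          rw [← mul_assoc, mul_comm (T ^ (-(P:ℝ)*Hu)) KK, mul_assoc, ← Real.rpow_add hT0,
            show -(P:ℝ)*Hu + (α + (P:ℝ)*Hu) = α by ring]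
  have hLnn : ∀ᶠ T in atTop, 0 ≤ L T := by
    filter_upwards [eventually_ge_atTop (1:ℝ)] with T hT
    rw [hL T]
    refine mul_nonneg (Real.rpow_nonneg (by linarith) _) (integral_nonneg fun s => ?_)
    exact Finset.prod_nonneg fun q _ => pow_nonneg (abs_nonneg _) _
  constructor
  · intro hgt
    have hαneg : α < 0 := by
      rw [hα]
      refine mul_neg_of_pos_of_neg (by linarith) ?_
      have hc : (P:ℝ) < 2*(S:ℝ) := by exact_mod_cast hgt
      linarith
    have h0 : Tendsto (fun T : ℝ => KK * T ^ α) atTop (nhds 0) := by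
      have := (tendsto_rpow_neg_atTop (y := -α) (by linarith)).const_mul KK
      simpa using this
    refine tendsto_of_tendsto_of_tendsto_of_le_of_le' tendsto_const_nhds h0 hLnn ?_
    filter_upwards [eventually_ge_atTop (1:ℝ)] with T hT
    exact main T hT
  · intro heq
    have hα0 : α = 0 := by
      rw [hα]
      have hc : 2*(S:ℝ) = (P:ℝ) := by exact_mod_cast heq
      have : (P:ℝ)/2 - (S:ℝ) = 0 := by linarith
      rw [this, mul_zero]
    refine ⟨KK, ?_⟩
    filter_upwards [eventually_ge_atTop (1:ℝ)] with T hT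
    have := main T hT
    rwa [hα0, Real.rpow_zero, mul_one] at this
end
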